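/- arXiv:1704.04370 — 9 statements merged into one kernel-verified Lean document; each statement's English description precedes it below -/
import Mathlib

section
/- In the random sketch model, for every bin index j ∈ {0,…,t−1} the indicator X_j satisfies E[X_j] = J; consequently E[X_0 + X_1 + ⋯ + X_{t−1}] = t·J. (Unbiasedness of the fast similarity sketch.) -/
/-!
Fix a bin `j` and let `W` be the element of `A ∪ B` owning the smallest key `(i, σ_i c)` among
the pairs `(i, c)` with `c ∈ A ∪ B` and `b_i c = j`. Keys of distinct pairs are distinct and
`S(A ∪ B)[j] = min (S(A)[j], S(B)[j])`, so `X_j = 1` exactly when `W ∈ A ∩ B`. For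
`x, y ∈ A ∪ B`, precomposing every `σ_i` and `b_i` with the transposition `(x y)` is a bijection
of the sample space that leaves the keys of `A ∪ B` unchanged and exchanges the events `W = x`
and `W = y`. Hence `W` is uniform on `A ∪ B`, and `E[X_j] = |A ∩ B| / |A ∪ B|`.
-/

open Finset

/-- The bin function of the sketch model: for `i < t` it is the (random) function `f i`;
for `t ≤ i < 2t` it is deterministically the constant function with value `i - t`. -/
def binFun {U : Type*} (t : ℕ) (f : Fin t → U → Fin t) (i : Fin (2 * t)) : U → Fin t :=
  if h : (i : ℕ) < t then f ⟨i, h⟩ else fun _ => ⟨(i : ℕ) - t, by have := i.isLt; omega⟩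

/-- The sketch key `S(C)[j]`: the lexicographically smallest pair `(i, σ i c)` over all
`i ∈ [2t]` and `c ∈ C` with `b i c = j` (as an element of `WithTop`, which is never `⊤`
when `C` is nonempty, since `b (t+j)` is constantly `j`). -/
def sketch {U : Type*} [Fintype U] [LinearOrder U] (t : ℕ) (σ : Fin (2 * t) → Equiv.Perm U)
    (b : Fin (2 * t) → U → Fin t) (C : Finset U) (j : Fin t) :
    WithTop (Lex (Fin (2 * t) × U)) :=
  (((Finset.univ ×ˢ C).filter fun p => b p.1 p.2 = j).image
    fun p => toLex (p.1, σ p.1 p.2)).min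

/-- The sample space of the random sketch model: a uniformly random permutation `σ i` for
each `i ∈ [2t]`, and a uniformly random bin function for each `i ∈ [t]`
(the bin functions for `t ≤ i < 2t` being deterministic); all components independent,
i.e. the whole tuple is uniform on this finite product space. -/
abbrev Model (U : Type*) [Fintype U] [DecidableEq U] (t : ℕ) : Type _ :=
  (Fin (2 * t) → Equiv.Perm U) × (Fin t → U → Fin t)

/-- The indicator `X_j = [S(A)[j] = S(B)[j]]` at sample point `ω`. -/
noncomputable def Xind {U : Type*} [Fintype U] [LinearOrder U] {t : ℕ}
    (ω : Model U t) (A B : Finset U) (j : Fin t) : ℝ :=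
  if sketch t ω.1 (binFun t ω.2) A j = sketch t ω.1 (binFun t ω.2) B j then 1 else 0

theorem Finset.min_eq_min_iff_mem_inter {α : Type*} [LinearOrder α] {s t : Finset α} {m : α}
    (hm : (s ∪ t).min = m) : s.min = t.min ↔ m ∈ s ∩ t := by
  rw [Finset.min_union] at hm
  constructor
  · intro hst
    rw [← hst, inf_idem] at hm
    exact Finset.mem_inter.mpr ⟨Finset.mem_of_min hm, Finset.mem_of_min (hst ▸ hm)⟩
  · intro hmst
    obtain ⟨hs, ht⟩ := Finset.mem_inter.mp hmst
    rw [le_antisymm (Finset.min_le hs) (hm ▸ inf_le_left),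
      le_antisymm (Finset.min_le ht) (hm ▸ inf_le_right)]

theorem Finset.card_filter_mem_of_card_fiber_eq {Ω α : Type*} [Fintype Ω] [DecidableEq α]
    {f : Ω → α} {S : Finset α} {N : ℕ} (hfiber : ∀ x ∈ S, #{ω | f ω = x} = N)
    {T : Finset α} (hTS : T ⊆ S) : #{ω | f ω ∈ T} = #T * N := by
  rw [← Finset.sum_card_fiberwise_eq_card_filter,
    Finset.sum_const_nat fun x hx => hfiber x (hTS hx)]

theorem Finset.swap_apply_mem_iff {α : Type*} [DecidableEq α] {s : Finset α} {x y : α}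
    (hx : x ∈ s) (hy : y ∈ s) (c : α) : Equiv.swap x y c ∈ s ↔ c ∈ s := by
  rw [Equiv.swap_apply_def]
  split_ifs with hcx hcy <;> simp_all

namespace SimilaritySketch

section Keys

variable {U : Type*} {t : ℕ}

def owner (σ : Fin (2 * t) → Equiv.Perm U) (k : Lex (Fin (2 * t) × U)) : U :=
  (σ (ofLex k).1).symm (ofLex k).2

theorem owner_mul_right (σ : Fin (2 * t) → Equiv.Perm U) (τ : Equiv.Perm U)
    (k : Lex (Fin (2 * t) × U)) : owner (fun i => σ i * τ) k = τ.symm (owner σ k) := by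
  simp [owner, Equiv.Perm.mul_def]

variable [LinearOrder U]

def keys (σ : Fin (2 * t) → Equiv.Perm U) (b : Fin (2 * t) → U → Fin t) (C : Finset U)
    (j : Fin t) : Finset (Lex (Fin (2 * t) × U)) :=
  ((univ ×ˢ C).filter fun p => b p.1 p.2 = j).image fun p => toLex (p.1, σ p.1 p.2)

theorem sketch_eq_min_keys [Fintype U] (σ : Fin (2 * t) → Equiv.Perm U)
    (b : Fin (2 * t) → U → Fin t) (C : Finset U) (j : Fin t) :
    sketch t σ b C j = (keys σ b C j).min := rfl

variable {σ : Fin (2 * t) → Equiv.Perm U} {b : Fin (2 * t) → U → Fin t} {C : Finset U}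
  {j : Fin t}

theorem mem_keys {k : Lex (Fin (2 * t) × U)} :
    k ∈ keys σ b C j ↔ owner σ k ∈ C ∧ b (ofLex k).1 (owner σ k) = j := by
  constructor
  · simp only [keys, mem_image, mem_filter, mem_product, mem_univ, true_and]
    rintro ⟨⟨i, c⟩, ⟨hc, hb⟩, rfl⟩
    simpa [owner] using ⟨hc, hb⟩
  · intro h
    exact mem_image.mpr ⟨((ofLex k).1, owner σ k), by simpa using h, by simp [owner]⟩

theorem keys_union (A B : Finset U) : keys σ b (A ∪ B) j = keys σ b A j ∪ keys σ b B j := by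
  ext k
  simp only [mem_union, mem_keys, or_and_right]

theorem keys_relabel (τ : Equiv.Perm U) (hτ : ∀ c, τ c ∈ C ↔ c ∈ C) :
    keys (fun i => σ i * τ) (fun i c => b i (τ c)) C j = keys σ b C j := by
  ext k
  rw [mem_keys, mem_keys, owner_mul_right, Equiv.apply_symm_apply, ← hτ, Equiv.apply_symm_apply]

theorem keys_binFun_nonempty (f : Fin t → U → Fin t) (hC : C.Nonempty) (j : Fin t) :
    (keys σ (binFun t f) C j).Nonempty := by
  obtain ⟨c, hc⟩ := hC
  refine Finset.image_nonempty.mpr ⟨(⟨t + j, by omega⟩, c), ?_⟩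
  simp [binFun, hc, Fin.ext_iff]

end Keys

section Model

variable {U : Type*} [Fintype U] [LinearOrder U] {t : ℕ}

def relabel (τ : Equiv.Perm U) : Model U t ≃ Model U t where
  toFun ω := (fun i => ω.1 i * τ, fun i c => ω.2 i (τ c))
  invFun ω := (fun i => ω.1 i * τ⁻¹, fun i c => ω.2 i (τ⁻¹ c))
  left_inv ω := by ext <;> simp
  right_inv ω := by ext <;> simp

theorem binFun_relabel (τ : Equiv.Perm U) (ω : Model U t) :
    binFun t (relabel τ ω).2 = fun i c => binFun t ω.2 i (τ c) := by
  funext i c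
  unfold binFun
  split_ifs <;> rfl

noncomputable def winningKey (ω : Model U t) {C : Finset U} (hC : C.Nonempty) (j : Fin t) :
    Lex (Fin (2 * t) × U) :=
  (keys ω.1 (binFun t ω.2) C j).min' (keys_binFun_nonempty ω.2 hC j)

noncomputable def winner (ω : Model U t) {C : Finset U} (hC : C.Nonempty) (j : Fin t) : U :=
  owner ω.1 (winningKey ω hC j)

variable {C : Finset U} (hC : C.Nonempty) (j : Fin t)

theorem winningKey_mem (ω : Model U t) : winningKey ω hC j ∈ keys ω.1 (binFun t ω.2) C j :=
  Finset.min'_mem _ _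

theorem winner_mem (ω : Model U t) : winner ω hC j ∈ C :=
  (mem_keys.mp (winningKey_mem hC j ω)).1

theorem Xind_eq_ite {A B : Finset U} (hAB : (A ∪ B).Nonempty) (ω : Model U t) :
    Xind ω A B j = if winner ω hAB j ∈ A ∩ B then 1 else 0 := by
  have hmin : (keys ω.1 (binFun t ω.2) A j ∪ keys ω.1 (binFun t ω.2) B j).min
      = winningKey ω hAB j := by
    rw [← keys_union, winningKey, Finset.coe_min']
  have hbin := (mem_keys.mp (winningKey_mem hAB j ω)).2
  have hwin : winningKey ω hAB j ∈ keys ω.1 (binFun t ω.2) A j ∩ keys ω.1 (binFun t ω.2) B j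
      ↔ winner ω hAB j ∈ A ∩ B := by
    simp only [Finset.mem_inter, mem_keys]
    exact ⟨fun h => ⟨h.1.1, h.2.1⟩, fun h => ⟨⟨h.1, hbin⟩, h.2, hbin⟩⟩
  simp only [Xind, sketch_eq_min_keys, Finset.min_eq_min_iff_mem_inter hmin, hwin]

theorem winner_relabel (τ : Equiv.Perm U) (hτ : ∀ c, τ c ∈ C ↔ c ∈ C) (ω : Model U t) :
    winner (relabel τ ω) hC j = τ.symm (winner ω hC j) := by
  have hkey : winningKey (relabel τ ω) hC j = winningKey ω hC j := by
    unfold winningKey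
    congr 1
    rw [binFun_relabel]
    exact keys_relabel τ hτ
  rw [winner, hkey]
  exact owner_mul_right _ τ _

theorem card_filter_winner_eq {x y : U} (hx : x ∈ C) (hy : y ∈ C) :
    #{ω : Model U t | winner ω hC j = x} = #{ω : Model U t | winner ω hC j = y} := by
  refine Finset.card_equiv (relabel (Equiv.swap x y)) fun ω => ?_
  simp only [Finset.mem_filter, Finset.mem_univ, true_and,
    winner_relabel hC j _ (Finset.swap_apply_mem_iff hx hy), Equiv.symm_swap,
    Equiv.swap_apply_eq_iff, Equiv.swap_apply_right]

theorem card_filter_winner_mem_mul_card {T : Finset U} (hTC : T ⊆ C) :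
    #{ω : Model U t | winner ω hC j ∈ T} * #C = Fintype.card (Model U t) * #T := by
  have ⟨x₀, hx₀⟩ := hC
  have hfiber : ∀ x ∈ C,
      #{ω : Model U t | winner ω hC j = x} = #{ω : Model U t | winner ω hC j = x₀} :=
    fun x hx => card_filter_winner_eq hC j hx hx₀
  have hΩ : Fintype.card (Model U t) = #{ω : Model U t | winner ω hC j ∈ C} := by
    rw [Finset.filter_true_of_mem fun ω _ => winner_mem hC j ω, Finset.card_univ]
  rw [hΩ, Finset.card_filter_mem_of_card_fiber_eq hfiber hTC,
    Finset.card_filter_mem_of_card_fiber_eq hfiber subset_rfl]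
  ring

end Model

end SimilaritySketch

open SimilaritySketch in
theorem stmt0_general {U : Type*} [Fintype U] [LinearOrder U] (t : ℕ)
    (A B : Finset U) (hAB : (A ∪ B).Nonempty) :
    (∀ j : Fin t,
      (∑ ω : Model U t, Xind ω A B j) / (Fintype.card (Model U t) : ℝ)
        = ((A ∩ B).card : ℝ) / ((A ∪ B).card : ℝ)) ∧
    (∑ ω : Model U t, ∑ j : Fin t, Xind ω A B j) / (Fintype.card (Model U t) : ℝ)
        = (t : ℝ) * (((A ∩ B).card : ℝ) / ((A ∪ B).card : ℝ)) := by
  have hΩ : (Fintype.card (Model U t) : ℝ) ≠ 0 := by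
    have : Nonempty (Model U t) := ⟨(1, fun i _ => i)⟩
    exact_mod_cast Fintype.card_ne_zero
  have hexpect (j : Fin t) : (∑ ω : Model U t, Xind ω A B j) / (Fintype.card (Model U t) : ℝ)
      = ((A ∩ B).card : ℝ) / ((A ∪ B).card : ℝ) := by
    have hcount := card_filter_winner_mem_mul_card hAB j Finset.inter_subset_union
    rw [Finset.sum_congr rfl fun ω _ => Xind_eq_ite j hAB ω, Finset.sum_boole,
      div_eq_div_iff hΩ (by exact_mod_cast hAB.card_ne_zero)]
    exact_mod_cast hcount.trans (mul_comm _ _)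
  refine ⟨hexpect, ?_⟩
  rw [Finset.sum_comm, Finset.sum_div, Finset.sum_congr rfl fun j _ => hexpect j,
    Finset.sum_const, Finset.card_univ, Fintype.card_fin, nsmul_eq_mul]

/-- **Unbiasedness of the fast similarity sketch.** In the random sketch model (uniform
measure on `Model U t`), `E[X_j] = J` for every bin `j`, and consequently
`E[∑ j, X_j] = t * J`, where `J = |A ∩ B| / |A ∪ B|`. -/
theorem stmt0 {U : Type*} [Fintype U] [LinearOrder U] (t : ℕ) (ht : 0 < t)
    (A B : Finset U) (hAB : (A ∪ B).Nonempty) :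
    (∀ j : Fin t,
      (∑ ω : Model U t, Xind ω A B j) / (Fintype.card (Model U t) : ℝ)
        = ((A ∩ B).card : ℝ) / ((A ∪ B).card : ℝ)) ∧
    (∑ ω : Model U t, ∑ j : Fin t, Xind ω A B j) / (Fintype.card (Model U t) : ℝ)
        = (t : ℝ) * (((A ∩ B).card : ℝ) / ((A ∪ B).card : ℝ)) :=
  stmt0_general t A B hAB
end

section
/- For every fixed (deterministic) choice of the permutations σ_0,…,σ_{2t−1} of U and bin functions b_0,…,b_{2t−1} with b_{t+j} constantly equal to j for every j ∈ {0,…,t−1}, and for all nonempty subsets A, B ⊆ U with A ≠ B, for every bin index j ∈ {0,…,t−1} exactly one of the following two equalities holds: S(A)[j] = S(B)[j], or S(A ∪ B)[j] = S(A △ B)[j], where A △ B = (A ∪ B) ∖ (A ∩ B) is the symmetric difference. Equivalently, [S(A)[j] = S(B)[j]] + [S(A ∪ B)[j] = S(A △ B)[j]] = 1. -/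
open Finset

/-- For every fixed choice of permutations and bin functions (with `b (t+j)` constantly
`j`), all nonempty `A ≠ B` and every bin `j`, exactly one of `S(A)[j] = S(B)[j]` and
`S(A ∪ B)[j] = S(A △ B)[j]` holds, where `A △ B = (A ∪ B) \ (A ∩ B)`; equivalently the
sum of the two indicators is `1`. -/
theorem stmt4 {U : Type*} [Fintype U] [LinearOrder U] (t : ℕ) (ht : 0 < t)
    (σ : Fin (2 * t) → Equiv.Perm U) (b : Fin (2 * t) → U → Fin t)
    (hb : ∀ j : Fin t, ∀ u : U, b ⟨t + (j : ℕ), by omega⟩ u = j)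
    (A B : Finset U) (hA : A.Nonempty) (hB : B.Nonempty) (hAB : A ≠ B) (j : Fin t) :
    (if sketch t σ b A j = sketch t σ b B j then (1 : ℕ) else 0)
      + (if sketch t σ b (A ∪ B) j = sketch t σ b ((A ∪ B) \ (A ∩ B)) j then (1 : ℕ) else 0)
      = 1 := by
  classical
  set k : Fin (2 * t) × U → Lex (Fin (2 * t) × U) := fun p => toLex (p.1, σ p.1 p.2)
    with hkdef
  have hkinj : Function.Injective k := by
    intro p q h
    have h' : (p.1, σ p.1 p.2) = (q.1, σ q.1 q.2) := toLex.injective h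
    rw [Prod.mk.injEq] at h'
    obtain ⟨h1, h2⟩ := h'
    rw [h1] at h2
    exact Prod.ext h1 ((σ q.1).injective h2)
  set K : Finset U → Finset (Lex (Fin (2 * t) × U)) :=
    fun C => ((Finset.univ ×ˢ C).filter fun p => b p.1 p.2 = j).image k with hKdef
  have hsk : ∀ C, sketch t σ b C j = (K C).min := fun C => rfl
  have hmem : ∀ (C : Finset U) (q : Fin (2 * t) × U), q.2 ∈ C → b q.1 q.2 = j →
      k q ∈ K C := by
    intro C q h1 h2
    exact Finset.mem_image_of_mem _
      (Finset.mem_filter.2 ⟨Finset.mem_product.2 ⟨Finset.mem_univ _, h1⟩, h2⟩)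
  have hback : ∀ (C : Finset U) (m : Lex (Fin (2 * t) × U)), (K C).min = (m : WithTop _) →
      ∃ q, q.2 ∈ C ∧ k q = m := by
    intro C m hm
    rcases Finset.mem_image.1 (Finset.mem_of_min hm) with ⟨q, hq, hkq⟩
    exact ⟨q, (Finset.mem_product.1 (Finset.mem_filter.1 hq).1).2, hkq⟩
  -- extract the minimizer of the union
  have hne : ∃ m : Lex (Fin (2 * t) × U), (K (A ∪ B)).min = (m : WithTop _) := by
    rcases hA with ⟨a, ha⟩
    have : k (⟨t + (j : ℕ), by omega⟩, a) ∈ K (A ∪ B) :=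
      hmem _ _ (Finset.mem_union_left _ ha) (hb j a)
    rcases Finset.min_of_mem this with ⟨m, hm⟩
    exact ⟨m, hm⟩
  obtain ⟨m, hm⟩ := hne
  obtain ⟨p, hpAB, hkp⟩ := hback _ _ hm
  have hmle : ∀ (C : Finset U), p.2 ∈ C → (K C).min = (m : WithTop _) → True := fun _ _ _ => trivial
  -- p satisfies the bin condition
  have hbp : b p.1 p.2 = j := by
    rcases Finset.mem_image.1 (Finset.mem_of_min hm) with ⟨q, hq, hkq⟩
    have : q = p := hkinj (hkq.trans hkp.symm)
    subst this
    exact (Finset.mem_filter.1 hq).2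
  -- if p.2 ∈ C ⊆ A ∪ B then the sketch of C equals m
  have heqC : ∀ (C : Finset U), C ⊆ A ∪ B → p.2 ∈ C → (K C).min = (m : WithTop _) := by
    intro C hCsub hpC
    have h1 : (K C).min ≤ (m : WithTop _) := hkp ▸ Finset.min_le (hmem C p hpC hbp)
    have h2 : (m : WithTop _) ≤ (K C).min := by
      rw [← hm]
      refine Finset.le_min ?_
      intro a haC
      refine Finset.min_le ?_
      have : K C ⊆ K (A ∪ B) := Finset.image_subset_image
        (Finset.filter_subset_filter _ (Finset.product_subset_product_right hCsub))
      exact this haC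
    exact le_antisymm h1 h2
  -- conversely, sketch C = m forces p.2 ∈ C
  have hforce : ∀ (C : Finset U), (K C).min = (m : WithTop _) → p.2 ∈ C := by
    intro C hC
    obtain ⟨q, hqC, hkq⟩ := hback C m hC
    have : q = p := hkinj (hkq.trans hkp.symm)
    exact this ▸ hqC
  by_cases hcase : p.2 ∈ A ∩ B
  · -- both sketches equal m, symmetric difference sketch differs
    have hpA : p.2 ∈ A := (Finset.mem_inter.1 hcase).1
    have hpB : p.2 ∈ B := (Finset.mem_inter.1 hcase).2
    have h1 : sketch t σ b A j = sketch t σ b B j := by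
      rw [hsk, hsk, heqC A Finset.subset_union_left hpA,
        heqC B Finset.subset_union_right hpB]
    have h2 : sketch t σ b (A ∪ B) j ≠ sketch t σ b ((A ∪ B) \ (A ∩ B)) j := by
      rw [hsk, hsk, hm]
      intro h
      have := hforce _ h.symm
      rw [Finset.mem_sdiff] at this
      exact this.2 hcase
    simp [h1, h2]
  · -- p.2 is in exactly one of A, B
    have hpdiff : p.2 ∈ (A ∪ B) \ (A ∩ B) := Finset.mem_sdiff.2 ⟨hpAB, hcase⟩
    have h2 : sketch t σ b (A ∪ B) j = sketch t σ b ((A ∪ B) \ (A ∩ B)) j := by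
      rw [hsk, hsk, hm, heqC _ Finset.sdiff_subset hpdiff]
    have h1 : sketch t σ b A j ≠ sketch t σ b B j := by
      rw [hsk, hsk]
      intro h
      rcases Finset.mem_union.1 hpAB with hpA | hpB
      · have hA' : (K A).min = (m : WithTop _) := heqC A Finset.subset_union_left hpA
        have hB' : (K B).min = (m : WithTop _) := h ▸ hA'
        exact hcase (Finset.mem_inter.2 ⟨hpA, hforce B hB'⟩)
      · have hB' : (K B).min = (m : WithTop _) := heqC B Finset.subset_union_right hpB
        have hA' : (K A).min = (m : WithTop _) := h.symm ▸ hB'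
        exact hcase (Finset.mem_inter.2 ⟨hforce A hA', hpB⟩)
    simp [h1, h2]
end

section
/- Let j_1 be a real number with 0 < j_1 < 1, let K ≥ 1 be an integer, set t := K·⌈1 + K·(1/j_1 − 1)⌉, and let J be a real number with j_1 ≤ J ≤ 1. Then ∏_{i=0}^{K−1} (tJ − i)/(t − i) ≥ J^K / 4; that is, (tJ)^{\underline{K}} / t^{\underline{K}} ≥ J^K / 4, where x^{\underline{K}} denotes the falling factorial x(x−1)⋯(x−K+1). (The collision-probability lower bound for the LSH parameter choice.) -/
/-- Weierstrass product inequality: `1 - ∑ f ≤ ∏ (1 - f)` when `0 ≤ f ≤ 1`. -/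
lemma weierstrass (s : Finset ℕ) (f : ℕ → ℝ) (h0 : ∀ i ∈ s, 0 ≤ f i)
    (h1 : ∀ i ∈ s, f i ≤ 1) :
    1 - ∑ i ∈ s, f i ≤ ∏ i ∈ s, (1 - f i) := by
  classical
  induction s using Finset.induction_on with
  | empty => simp
  | @insert a s' ha ih =>
    rw [Finset.sum_insert ha, Finset.prod_insert ha]
    have h0a := h0 a (Finset.mem_insert_self a s')
    have h1a := h1 a (Finset.mem_insert_self a s')
    have ih' := ih (fun i hi => h0 i (Finset.mem_insert_of_mem hi))
      (fun i hi => h1 i (Finset.mem_insert_of_mem hi))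
    have hsum : 0 ≤ ∑ i ∈ s', f i :=
      Finset.sum_nonneg fun i hi => h0 i (Finset.mem_insert_of_mem hi)
    nlinarith [mul_le_mul_of_nonneg_left ih' (by linarith : (0:ℝ) ≤ 1 - f a)]

lemma sum_range_cast (n : ℕ) : ∑ i ∈ Finset.range n, (i:ℝ) = n * (n - 1) / 2 := by
  induction n with
  | zero => simp
  | succ m ih => rw [Finset.sum_range_succ, ih]; push_cast; ring

/-- **The collision-probability lower bound for the LSH parameter choice.** For
`0 < j₁ < 1`, an integer `K ≥ 1`, `t := K·⌈1 + K(1/j₁ − 1)⌉` and `j₁ ≤ J ≤ 1`,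
the falling-factorial ratio satisfies `(tJ)^{\underline K} / t^{\underline K} ≥ J^K / 4`. -/
theorem stmt8 (j₁ : ℝ) (hj₁0 : 0 < j₁) (hj₁1 : j₁ < 1) (K : ℕ) (hK : 1 ≤ K)
    (t : ℕ) (ht : t = K * ⌈1 + (K : ℝ) * (1 / j₁ - 1)⌉₊
    ) (J : ℝ) (hJ : j₁ ≤ J) (hJ1 : J ≤ 1) :
    (∏ i ∈ Finset.range K, ((t : ℝ) * J - (i : ℝ)))
        / (∏ i ∈ Finset.range K, ((t : ℝ) - (i : ℝ)))
      ≥ J ^ K / 4 := by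
  obtain ⟨c, hc⟩ : ∃ c : ℝ, c = 1 / j₁ - 1 := ⟨_, rfl⟩
  rw [← hc] at ht
  have hc0 : 0 < c := by
    have : 1 < 1 / j₁ := (one_lt_div hj₁0).mpr hj₁1
    rw [hc]; linarith
  have hJ0 : 0 < J := lt_of_lt_of_le hj₁0 hJ
  have hK1 : (1:ℝ) ≤ K := by exact_mod_cast hK
  have hK0 : (0:ℝ) < K := by linarith
  have hKsq : (0:ℝ) < (K:ℝ)^2 := by positivity
  -- lower bound on t
  have htc : (K : ℝ) + (K:ℝ)^2 * c ≤ (t : ℝ) := by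
    have hle : (1 + (K : ℝ) * c) ≤ (⌈1 + (K : ℝ) * c⌉₊ : ℝ) := Nat.le_ceil _
    have heq : (t : ℝ) = (K : ℝ) * (⌈1 + (K : ℝ) * c⌉₊ : ℝ) := by
      rw [ht]; push_cast; ring
    rw [heq]
    nlinarith [mul_le_mul_of_nonneg_left hle (le_of_lt hK0)]
  -- each denominator factor is positive and large
  have hden : ∀ i ∈ Finset.range K, (0:ℝ) < (t:ℝ) - i ∧ (K:ℝ)^2 * c ≤ (t:ℝ) - i := by
    intro i hi
    have hi' : (i : ℝ) ≤ (K:ℝ) - 1 := by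
      have h := Finset.mem_range.mp hi
      have : (i:ℝ) + 1 ≤ (K:ℝ) := by exact_mod_cast h
      linarith
    constructor <;> nlinarith
  have hD : 0 < ∏ i ∈ Finset.range K, ((t : ℝ) - (i : ℝ)) :=
    Finset.prod_pos fun i hi => (hden i hi).1
  -- pointwise bound: tJ - i ≥ J * (1 - i/K²) * (t - i)
  have hpt : ∀ i ∈ Finset.range K,
      J * (1 - (i:ℝ)/(K:ℝ)^2) * ((t:ℝ) - i) ≤ (t:ℝ) * J - i := by
    intro i hi
    obtain ⟨h1, h2⟩ := hden i hi
    have hi0 : (0:ℝ) ≤ i := Nat.cast_nonneg i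
    have hJc : 1/J - 1 ≤ c := by
      have : 1/J ≤ 1/j₁ := one_div_le_one_div_of_le hj₁0 hJ
      rw [hc]; linarith
    have key : (1/J - 1) * (K:ℝ)^2 ≤ (t:ℝ) - i := le_trans (by nlinarith) h2
    have hJne : J ≠ 0 := ne_of_gt hJ0
    have expand : (t:ℝ) * J - i - J * (1 - (i:ℝ)/(K:ℝ)^2) * ((t:ℝ) - i)
        = (i:ℝ) * (J/(K:ℝ)^2) * (((t:ℝ) - i) - (1/J - 1) * (K:ℝ)^2) := by
      field_simp
      ring
    nlinarith [mul_nonneg (mul_nonneg hi0 (le_of_lt (div_pos hJ0 hKsq)))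
      (by linarith : (0:ℝ) ≤ ((t:ℝ) - i) - (1/J - 1) * (K:ℝ)^2)]
  have hiK2 : ∀ i ∈ Finset.range K, (i:ℝ)/(K:ℝ)^2 ≤ 1 := by
    intro i hi
    have hi' : (i : ℝ) < (K:ℝ) := by exact_mod_cast Finset.mem_range.mp hi
    rw [div_le_one hKsq]; nlinarith
  -- lower bound factors nonneg
  have hnn : ∀ i ∈ Finset.range K, (0:ℝ) ≤ J * (1 - (i:ℝ)/(K:ℝ)^2) * ((t:ℝ) - i) := by
    intro i hi
    have h1 := (hden i hi).1
    have h2 := hiK2 i hi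
    have : (0:ℝ) ≤ 1 - (i:ℝ)/(K:ℝ)^2 := by linarith
    exact mul_nonneg (mul_nonneg (le_of_lt hJ0) this) (le_of_lt h1)
  have hprodle : ∏ i ∈ Finset.range K, (J * (1 - (i:ℝ)/(K:ℝ)^2) * ((t:ℝ) - i))
      ≤ ∏ i ∈ Finset.range K, ((t:ℝ) * J - i) :=
    Finset.prod_le_prod hnn hpt
  have hsplit : ∏ i ∈ Finset.range K, (J * (1 - (i:ℝ)/(K:ℝ)^2) * ((t:ℝ) - i))
      = J ^ K * (∏ i ∈ Finset.range K, (1 - (i:ℝ)/(K:ℝ)^2))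
        * ∏ i ∈ Finset.range K, ((t:ℝ) - i) := by
    rw [Finset.prod_mul_distrib, Finset.prod_mul_distrib, Finset.prod_const,
      Finset.card_range]
  -- Weierstrass bound
  have hW := weierstrass (Finset.range K) (fun i => (i:ℝ)/(K:ℝ)^2)
    (fun i _ => by positivity) hiK2
  have hsum : ∑ i ∈ Finset.range K, (i:ℝ)/(K:ℝ)^2 ≤ 1/2 := by
    rw [← Finset.sum_div, sum_range_cast, div_le_iff₀ hKsq]
    nlinarith
  have hWb : (1:ℝ)/2 ≤ ∏ i ∈ Finset.range K, (1 - (i:ℝ)/(K:ℝ)^2) := by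
    linarith
  -- conclude
  rw [ge_iff_le, div_le_div_iff₀ (by norm_num) hD]
  have hJK : (0:ℝ) ≤ J ^ K := le_of_lt (pow_pos hJ0 K)
  have hPD : J ^ K * (1/2) * ∏ i ∈ Finset.range K, ((t:ℝ) - i)
      ≤ ∏ i ∈ Finset.range K, ((t:ℝ) * J - i) := by
    refine le_trans ?_ (le_trans (le_of_eq hsplit.symm) hprodle)
    apply mul_le_mul_of_nonneg_right _ (le_of_lt hD)
    exact mul_le_mul_of_nonneg_left hWb hJK
  have hN : (0:ℝ) ≤ ∏ i ∈ Finset.range K, ((t:ℝ) * J - i) :=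
    Finset.prod_nonneg fun i hi => le_trans (hnn i hi) (hpt i hi)
  calc J ^ K * ∏ i ∈ Finset.range K, ((t:ℝ) - i)
      = 2 * (J ^ K * (1/2) * ∏ i ∈ Finset.range K, ((t:ℝ) - i)) := by ring
    _ ≤ 2 * ∏ i ∈ Finset.range K, ((t:ℝ) * J - i) := by linarith
    _ ≤ (∏ i ∈ Finset.range K, ((t:ℝ) * J - i)) * 4 := by linarith
end

section
/- Let t, K be positive integers with K dividing t, let J be a real with 0 ≤ J ≤ 1, and let X_0,…,X_{t−1} be {0,1}-valued random variables such that E[∏_{j ∈ I} X_j] ≤ J^{|I|} for every subset I ⊆ {0,…,t−1}. Let T = (T_0,…,T_{K−1}) be a random row independent of (X_0,…,X_{t−1}). Then P( X_{T_0} = X_{T_1} = ⋯ = X_{T_{K−1}} = 1 ) ≤ J^K. In particular, if n ≥ 1, 0 < j_2 < 1, J ≤ j_2 and K ≥ ln n / ln(1/j_2), then this probability is at most 1/n. (False-positive probability bound for one LSH row.) -/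
/-!
Conditioning on the value `v` of the row, independence gives
`P(∀ j, X_{T_j} = 1) = ∑_v P(T = v) · P(∀ j, X_{v_j} = 1)`. Since the blocks are disjoint, the row
only charges injective `v`, and for injective `v` the indicator of `∀ j, X_{v_j} = 1` is the product
of the `X_i` over the `K` distinct indices `v_j`, whose mean is at most `J^K`. The bound `1/n` is
`j₂^K ≤ 1/n` read through logarithms.
-/

open MeasureTheory ProbabilityTheory Function

section

variable {Ω ι κ : Type*}

lemma prod_eq_indicator_forall_eq_one {X : ι → Ω → ℝ} (hX01 : ∀ i ω, X i ω = 0 ∨ X i ω = 1)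
    (I : Finset ι) : (fun ω => ∏ i ∈ I, X i ω) = {ω | ∀ i ∈ I, X i ω = 1}.indicator 1 := by
  ext ω
  by_cases h : ∀ i ∈ I, X i ω = 1
  · rw [Set.indicator_of_mem (show ω ∈ {ω | ∀ i ∈ I, X i ω = 1} from h), Finset.prod_eq_one h,
      Pi.one_apply]
  · push Not at h
    obtain ⟨i, hi, hne⟩ := h
    rw [Set.indicator_of_notMem fun (h' : ∀ i ∈ I, X i ω = 1) => hne (h' i hi)]
    exact Finset.prod_eq_zero hi ((hX01 i ω).resolve_right hne)

variable [MeasurableSpace Ω] {P : Measure Ω}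

lemma sum_measure_preimage_singleton_univ {β : Type*} [Fintype β] [MeasurableSpace β]
    [MeasurableSingletonClass β] {μ : Measure Ω} {f : Ω → β} (hf : Measurable f) :
    ∑ b, μ (f ⁻¹' {b}) = μ Set.univ := by
  rw [sum_measure_preimage_singleton _ fun b _ => hf (measurableSet_singleton b),
    Finset.coe_univ, Set.preimage_univ]

lemma measure_forall_eq_one_le_of_injective [Fintype κ] [IsFiniteMeasure P] {X : ι → Ω → ℝ}
    (hX : ∀ i, Measurable (X i)) (hX01 : ∀ i ω, X i ω = 0 ∨ X i ω = 1) {J : ℝ}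
    (hmom : ∀ I : Finset ι, ∫ ω, ∏ i ∈ I, X i ω ∂P ≤ J ^ I.card) {v : κ → ι}
    (hv : Injective v) :
    P {ω | ∀ j, X (v j) ω = 1} ≤ ENNReal.ofReal (J ^ Fintype.card κ) := by
  set I := Finset.univ.map ⟨v, hv⟩
  have hset : {ω | ∀ j, X (v j) ω = 1} = {ω | ∀ i ∈ I, X i ω = 1} := by simp [I]
  have hmeas : MeasurableSet {ω | ∀ i ∈ I, X i ω = 1} := by
    simp only [Set.ofPred_forall]
    exact Finset.measurableSet_biInter I fun i _ => hX i (measurableSet_singleton 1)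
  rw [hset, ← ofReal_measureReal, ← integral_indicator_one hmeas,
    ← prod_eq_indicator_forall_eq_one hX01]
  simpa [I] using ENNReal.ofReal_le_ofReal (hmom I)

lemma measure_forall_comp_eq_one_le [Fintype κ] [MeasurableSpace ι] [Finite ι]
    [MeasurableSingletonClass ι] [IsProbabilityMeasure P] {X : ι → Ω → ℝ}
    (hX : ∀ i, Measurable (X i)) (hX01 : ∀ i ω, X i ω = 0 ∨ X i ω = 1) {J : ℝ}
    (hmom : ∀ I : Finset ι, ∫ ω, ∏ i ∈ I, X i ω ∂P ≤ J ^ I.card) {T : κ → Ω → ι}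
    (hT : ∀ j, Measurable (T j)) (hinj : ∀ᵐ ω ∂P, Injective fun j => T j ω)
    (hindep : IndepFun (fun ω j => T j ω) (fun ω i => X i ω) P) :
    P {ω | ∀ j, X (T j ω) ω = 1} ≤ ENNReal.ofReal (J ^ Fintype.card κ) := by
  have := Fintype.ofFinite (κ → ι)
  set f : Ω → κ → ι := fun ω j => T j ω
  set g : Ω → ι → ℝ := fun ω i => X i ω
  set S := {ω | ∀ j, X (T j ω) ω = 1}
  set B : (κ → ι) → Set (ι → ℝ) := fun v => {y | ∀ j, y (v j) = 1}
  set c := ENNReal.ofReal (J ^ Fintype.card κ)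
  have hf : Measurable f := measurable_pi_iff.mpr hT
  have hB : ∀ v, MeasurableSet (B v) := fun v => by
    simp only [B, Set.ofPred_forall]
    exact MeasurableSet.iInter fun j => measurable_pi_apply (v j) (measurableSet_singleton 1)
  have hfiber : ∀ v, f ⁻¹' {v} ∩ S = f ⁻¹' {v} ∩ g ⁻¹' B v := by
    intro v
    ext ω
    constructor <;> rintro ⟨rfl, h⟩ <;> exact ⟨rfl, h⟩
  have hterm : ∀ v, P (f ⁻¹' {v}) * P (g ⁻¹' B v) ≤ P (f ⁻¹' {v}) * c := by
    intro v
    by_cases hv : Injective v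
    · exact mul_le_mul_right (measure_forall_eq_one_le_of_injective hX hX01 hmom hv) _
    · have hnull : P (f ⁻¹' {v}) = 0 :=
        measure_mono_null (fun ω (hω : f ω = v) => show ¬Injective (f ω) by rwa [hω])
          (ae_iff.mp hinj)
      simp [hnull]
  calc P S = ∑ v, P (f ⁻¹' {v} ∩ S) := by
        simp_rw [← Measure.restrict_apply (hf (measurableSet_singleton _)),
          sum_measure_preimage_singleton_univ hf, Measure.restrict_apply_univ]
    _ = ∑ v, P (f ⁻¹' {v}) * P (g ⁻¹' B v) := by
        simp_rw [hfiber,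
          hindep.measure_inter_preimage_eq_mul _ _ (measurableSet_singleton _) (hB _)]
    _ ≤ ∑ v, P (f ⁻¹' {v}) * c := Finset.sum_le_sum fun v _ => hterm v
    _ = c := by
        rw [← Finset.sum_mul, sum_measure_preimage_singleton_univ hf, measure_univ, one_mul]

lemma injective_of_mem_blocks {K m : ℕ} {v : Fin K → ℕ}
    (hv : ∀ j : Fin K, (j : ℕ) * m ≤ v j ∧ v j < ((j : ℕ) + 1) * m) : Injective v := by
  have hdiv : ∀ j, v j / m = j := fun j => Nat.div_eq_of_lt_le (hv j).1 (hv j).2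
  intro j j' h
  exact Fin.ext (by rw [← hdiv j, ← hdiv j', h])

lemma ae_injective_of_measure_ne_zero [Finite κ] [Countable ι] {T : κ → Ω → ι}
    (h : ∀ v : κ → ι, P {ω | ∀ j, T j ω = v j} ≠ 0 → Injective v) :
    ∀ᵐ ω ∂P, Injective fun j => T j ω := by
  rw [ae_iff]
  change P ((fun ω j => T j ω) ⁻¹' {v | ¬ Injective v}) = 0
  rw [measure_preimage_eq_zero_iff_of_countable (Set.to_countable _)]
  intro v hv
  by_contra hne
  exact hv (h v (by simpa [Set.preimage, funext_iff] using hne))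

end

lemma pow_le_one_div_of_log_div_log_inv_le {q : ℝ} {K n : ℕ} (hq0 : 0 < q) (hq1 : q < 1)
    (hn : 0 < n) (h : Real.log n / Real.log (1 / q) ≤ K) : q ^ K ≤ 1 / n := by
  have hlog : 0 < Real.log (1 / q) := Real.log_pos ((one_lt_div hq0).mpr hq1)
  have hn' : (0 : ℝ) < n := by exact_mod_cast hn
  rw [div_le_iff₀ hlog, one_div, Real.log_inv] at h
  rw [le_div_iff₀ hn', mul_comm, ← Real.log_nonpos_iff (by positivity),
    Real.log_mul hn'.ne' (by positivity), Real.log_pow]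
  linarith

theorem stmt9_general {Ω : Type*} [MeasurableSpace Ω] (P : Measure Ω) [IsProbabilityMeasure P]
    (t K : ℕ) (ht : 0 < t) (J : ℝ)
    (X : Fin t → Ω → ℝ) (hXmeas : ∀ i, Measurable (X i))
    (hX01 : ∀ i ω, X i ω = 0 ∨ X i ω = 1)
    (hmom : ∀ I : Finset (Fin t), ∫ ω, ∏ i ∈ I, X i ω ∂P ≤ J ^ I.card)
    (T : Fin K → Ω → Fin t) (hTmeas : ∀ j, Measurable (T j))
    (hTdist : ∀ v : Fin K → Fin t,
      P {ω | ∀ j, T j ω = v j}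
        = ∏ j : Fin K,
            (if (j : ℕ) * (t / K) ≤ (v j : ℕ) ∧ (v j : ℕ) < ((j : ℕ) + 1) * (t / K)
              then ((K : ENNReal) / (t : ENNReal)) else 0))
    (hindep : IndepFun (fun ω => fun j => T j ω) (fun ω => fun i => X i ω) P) :
    P {ω | ∀ j : Fin K, X (T j ω) ω = 1} ≤ ENNReal.ofReal (J ^ K) ∧
    (∀ (n : ℕ) (j₂ : ℝ), 1 ≤ n → 0 < j₂ → j₂ < 1 → J ≤ j₂ →
      Real.log n / Real.log (1 / j₂) ≤ (K : ℝ) →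
      P {ω | ∀ j : Fin K, X (T j ω) ω = 1} ≤ 1 / (n : ENNReal)) := by
  have hJ : 0 ≤ J := by
    have hX0 : 0 ≤ ∫ ω, X ⟨0, ht⟩ ω ∂P :=
      integral_nonneg fun ω => (hX01 _ ω).elim (fun h => h.ge) fun h => h ▸ zero_le_one
    exact hX0.trans (by simpa using hmom {⟨0, ht⟩})
  have hinj : ∀ᵐ ω ∂P, Injective fun j => T j ω :=
    ae_injective_of_measure_ne_zero fun v hv => by
      rw [hTdist v, Finset.prod_ne_zero_iff] at hv
      have hblocks : ∀ j : Fin K, (j : ℕ) * (t / K) ≤ v j ∧ (v j : ℕ) < ((j : ℕ) + 1) * (t / K) :=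
        fun j => by_contra fun hj => hv j (Finset.mem_univ j) (if_neg hj)
      exact (injective_of_mem_blocks hblocks).of_comp
  have hrow := measure_forall_comp_eq_one_le hXmeas hX01 hmom hTmeas hinj hindep
  rw [Fintype.card_fin] at hrow
  refine ⟨hrow, fun n j₂ hn hj₂0 hj₂1 hJj₂ hlog => hrow.trans ?_⟩
  have hJn : J ^ K ≤ 1 / n := (pow_le_pow_left₀ hJ hJj₂ K).trans
    (pow_le_one_div_of_log_div_log_inv_le hj₂0 hj₂1 hn hlog)
  have hn' : (0 : ℝ) < n := by exact_mod_cast hn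
  simpa [ENNReal.ofReal_inv_of_pos hn'] using ENNReal.ofReal_le_ofReal hJn

/-- **False-positive probability bound for one LSH row.** Let `K ∣ t`, let
`X_0,…,X_{t−1}` be `{0,1}`-valued random variables with `E[∏_{j∈I} X_j] ≤ J^{|I|}` for
every `I ⊆ [t]`, and let `T = (T_0,…,T_{K−1})` be a random row (the `T_j` mutually
independent, `T_j` uniform on the block `{j(t/K),…,(j+1)(t/K)−1}` — which together is
expressed by the product formula for the joint law of `T`), independent of
`(X_0,…,X_{t−1})`. Then `P(∀ j, X_{T_j} = 1) ≤ J^K`; in particular, if `n ≥ 1`,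
`0 < j₂ < 1`, `J ≤ j₂` and `K ≥ ln n / ln(1/j₂)`, this probability is at most `1/n`. -/
theorem stmt9 {Ω : Type*} [MeasurableSpace Ω] (P : Measure Ω) [IsProbabilityMeasure P]
    (t K : ℕ) (ht : 0 < t) (hK : 0 < K) (hKt : K ∣ t) (J : ℝ)
    (X : Fin t → Ω → ℝ) (hXmeas : ∀ i, Measurable (X i))
    (hX01 : ∀ i ω, X i ω = 0 ∨ X i ω = 1)
    (hmom : ∀ I : Finset (Fin t), ∫ ω, ∏ i ∈ I, X i ω ∂P ≤ J ^ I.card)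
    (T : Fin K → Ω → Fin t) (hTmeas : ∀ j, Measurable (T j))
    (hTdist : ∀ v : Fin K → Fin t,
      P {ω | ∀ j, T j ω = v j}
        = ∏ j : Fin K,
            (if (j : ℕ) * (t / K) ≤ (v j : ℕ) ∧ (v j : ℕ) < ((j : ℕ) + 1) * (t / K)
              then ((K : ENNReal) / (t : ENNReal)) else 0))
    (hindep : IndepFun (fun ω => fun j => T j ω) (fun ω => fun i => X i ω) P) :
    P {ω | ∀ j : Fin K, X (T j ω) ω = 1} ≤ ENNReal.ofReal (J ^ K) ∧
    (∀ (n : ℕ) (j₂ : ℝ), 1 ≤ n → 0 < j₂ → j₂ < 1 → J ≤ j₂ →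
      Real.log n / Real.log (1 / j₂) ≤ (K : ℝ) →
      P {ω | ∀ j : Fin K, X (T j ω) ω = 1} ≤ 1 / (n : ENNReal)) :=
  stmt9_general P t K ht J X hXmeas hX01 hmom T hTmeas hTdist hindep
end

section
/- Let t, K be positive integers with K dividing t, let J be a real with 0 < J ≤ 1, and let X_0,…,X_{t−1} be {0,1}-valued random variables such that E[∏_{j ∈ I} X_j] ≤ J^{|I|} for every subset I ⊆ {0,…,t−1}. Let T = (T_0,…,T_{K−1}) and T' = (T'_0,…,T'_{K−1}) be two random rows that are independent of each other and of (X_0,…,X_{t−1}). Let Y := ∏_{j=0}^{K−1} X_{T_j} and Y' := ∏_{j=0}^{K−1} X_{T'_j}. Then E[ Y · Y' ] ≤ J^{2K} · ( 1 + K(1−J)/(J t) )^{K}. (Second-moment bound for two LSH rows.) -/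
/-!
By independence, `E[Y Y'] = ∑_{v,v'} P(T = v, T' = v') E[∏_j X_{v j} ∏_j X_{v' j}]`. For rows
lying in their blocks, `v j = v' j'` forces `j = j'`, so the two products together involve
`2K - c` distinct indices, where `c = #{j | v j = v' j}`; as the `X_i` take values in `[0, 1]`,
the moment hypothesis bounds the expectation by `J ^ (2K - c) = ∏_j (if v j = v' j then J else J²)`.
The resulting weighted sum factorises over the blocks, and block `j` contributes the expectation
of `J² + (J - J²) [a = b]` for two independent uniform points `a, b` of a block of size
`m = t / K`, which is `J² + (J - J²) / m`.
-/

open MeasureTheory ProbabilityTheory Finset Function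

section Combinatorics

lemma injective_of_comp_eq {ι α β : Type*} {f : α → β} {e : ι → β} (he : Injective e)
    {w : ι → α} (hw : ∀ j, f (w j) = e j) : Injective w :=
  .of_comp (f := f) (by rwa [← funext hw] at he)

variable {ι α β : Type*} [Fintype ι] [DecidableEq α]

lemma prod_mul_prod_le_prod_image_union {x : α → ℝ} (h0 : ∀ i, 0 ≤ x i) (h1 : ∀ i, x i ≤ 1)
    {v v' : ι → α} (hv : Injective v) (hv' : Injective v') :
    (∏ j, x (v j)) * ∏ j, x (v' j) ≤ ∏ i ∈ univ.image v ∪ univ.image v', x i := by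
  rw [← prod_image hv.injOn, ← prod_image hv'.injOn, ← prod_union_inter]
  exact mul_le_of_le_one_right (prod_nonneg fun i _ => h0 i)
    (prod_le_one (fun i _ => h0 i) fun i _ => h1 i)

lemma card_image_union_add_card_filter_eq {f : α → β} {e : ι → β} (he : Injective e)
    {v v' : ι → α} (hv : ∀ j, f (v j) = e j) (hv' : ∀ j, f (v' j) = e j) :
    #(univ.image v ∪ univ.image v') + #{j | v j = v' j} = 2 * Fintype.card ι := by
  have hinter : univ.image v ∩ univ.image v' = ({j | v j = v' j} : Finset ι).image v := by
    ext i
    simp only [mem_inter, mem_image, mem_univ, true_and, mem_filter]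
    constructor
    · rintro ⟨⟨j, rfl⟩, j', hj'⟩
      obtain rfl : j' = j := he (by rw [← hv j, ← hj', hv' j'])
      exact ⟨j', hj'.symm, rfl⟩
    · rintro ⟨j, hj, rfl⟩
      exact ⟨⟨j, rfl⟩, j, hj.symm⟩
  have hvinj := injective_of_comp_eq he hv
  rw [← card_image_of_injective _ hvinj, ← hinter, card_union_add_card_inter,
    card_image_of_injective _ hvinj, card_image_of_injective _ (injective_of_comp_eq he hv'),
    card_univ, two_mul]

lemma sum_sum_mul_ite_eq [Fintype α] (w : α → ℝ) (J : ℝ) :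
    ∑ a, ∑ b, w a * w b * (if a = b then J else J ^ 2)
      = J ^ 2 * (∑ a, w a) ^ 2 + (J - J ^ 2) * ∑ a, w a ^ 2 := by
  have hsplit : ∀ a b, w a * w b * (if a = b then J else J ^ 2)
      = J ^ 2 * (w a * w b) + if a = b then (J - J ^ 2) * w a ^ 2 else 0 := by
    intro a b
    split_ifs with h
    · subst h; ring
    · ring
  simp only [hsplit, sum_add_distrib, sum_ite_eq, mem_univ, if_true, ← mul_sum, sq (∑ a, w a),
    sum_mul_sum]

end Combinatorics

noncomputable def blockWeight (m j a : ℕ) : ℝ :=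
  if j * m ≤ a ∧ a < (j + 1) * m then (m : ℝ)⁻¹ else 0

section BlockWeight

variable {m j : ℕ}

lemma blockWeight_nonneg (a : ℕ) : 0 ≤ blockWeight m j a := by
  unfold blockWeight; split_ifs <;> positivity

lemma div_eq_of_blockWeight_ne_zero {a : ℕ} (h : blockWeight m j a ≠ 0) : a / m = j := by
  unfold blockWeight at h
  split_ifs at h with hblock
  · exact Nat.div_eq_of_lt_le hblock.1 hblock.2
  · exact absurd rfl h

lemma sum_ite_mem_block {t : ℕ} (h : (j + 1) * m ≤ t) (y : ℝ) :
    ∑ a : Fin t, (if j * m ≤ (a : ℕ) ∧ (a : ℕ) < (j + 1) * m then y else 0) = m * y := by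
  rw [Fin.sum_univ_eq_sum_range (fun a => if j * m ≤ a ∧ a < (j + 1) * m then y else 0),
    ← sum_filter]
  have hblock : {a ∈ range t | j * m ≤ a ∧ a < (j + 1) * m} = Ico (j * m) ((j + 1) * m) := by
    ext a
    simp only [mem_filter, mem_range, mem_Ico]
    omega
  rw [hblock, sum_const, Nat.card_Ico, add_one_mul, Nat.add_sub_cancel_left, nsmul_eq_mul]

lemma sum_blockWeight {t : ℕ} (hm : 0 < m) (h : (j + 1) * m ≤ t) :
    ∑ a : Fin t, blockWeight m j a = 1 := by
  simp only [blockWeight]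
  rw [sum_ite_mem_block h]
  field_simp

lemma sum_blockWeight_sq {t : ℕ} (h : (j + 1) * m ≤ t) :
    ∑ a : Fin t, blockWeight m j a ^ 2 = (m : ℝ)⁻¹ := by
  simp only [blockWeight, ite_pow, zero_pow two_ne_zero]
  rw [sum_ite_mem_block h]
  rcases m.eq_zero_or_pos with rfl | hm
  · simp
  · field_simp

lemma sum_sum_blockWeight_mul_ite {t : ℕ} (hm : 0 < m) (h : (j + 1) * m ≤ t) (J : ℝ) :
    ∑ a : Fin t, ∑ b : Fin t, blockWeight m j a * blockWeight m j b * (if a = b then J else J ^ 2)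
      = J ^ 2 + (J - J ^ 2) / m := by
  rw [sum_sum_mul_ite_eq, sum_blockWeight hm h, sum_blockWeight_sq h]
  ring

end BlockWeight

section Moments

variable {Ω α : Type*} [MeasurableSpace Ω] {P : Measure Ω} [IsFiniteMeasure P]

lemma integrable_of_nonneg_of_le_one {f : Ω → ℝ} (hf : Measurable f) (h0 : ∀ ω, 0 ≤ f ω)
    (h1 : ∀ ω, f ω ≤ 1) : Integrable f P :=
  .of_bound hf.aestronglyMeasurable 1
    (ae_of_all _ fun ω => by rw [Real.norm_of_nonneg (h0 ω)]; exact h1 ω)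

variable {X : α → Ω → ℝ} (hXmeas : ∀ i, Measurable (X i)) (hX0 : ∀ i ω, 0 ≤ X i ω)
  (hX1 : ∀ i ω, X i ω ≤ 1)
include hXmeas hX0 hX1

lemma integrable_prod_mul_prod {ι : Type*} [Fintype ι] (v v' : ι → α) :
    Integrable (fun ω => (∏ j, X (v j) ω) * ∏ j, X (v' j) ω) P :=
  have hprod0 (w : ι → α) ω : 0 ≤ ∏ j, X (w j) ω := prod_nonneg fun j _ => hX0 _ ω
  have hprod1 (w : ι → α) ω : ∏ j, X (w j) ω ≤ 1 :=
    prod_le_one (fun j _ => hX0 _ ω) fun j _ => hX1 _ ω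
  integrable_of_nonneg_of_le_one (by fun_prop) (fun ω => mul_nonneg (hprod0 v ω) (hprod0 v' ω))
    fun ω => mul_le_one₀ (hprod1 v ω) (hprod0 v' ω) (hprod1 v' ω)

theorem integral_prod_mul_prod_le_prod_ite [DecidableEq α] {J : ℝ}
    (hmom : ∀ I : Finset α, ∫ ω, ∏ i ∈ I, X i ω ∂P ≤ J ^ #I) {ι β : Type*} [Fintype ι]
    {f : α → β} {e : ι → β} (he : Injective e) {v v' : ι → α} (hv : ∀ j, f (v j) = e j)
    (hv' : ∀ j, f (v' j) = e j) :
    ∫ ω, (∏ j, X (v j) ω) * ∏ j, X (v' j) ω ∂P ≤ ∏ j, if v j = v' j then J else J ^ 2 := by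
  have hcard := card_image_union_add_card_filter_eq he hv hv'
  set U := univ.image v ∪ univ.image v'
  have hfilter := card_filter_add_card_filter_not (s := univ) fun j => v j = v' j
  rw [card_univ] at hfilter
  have hexp : #U = #{j | v j = v' j} + 2 * #{j | ¬v j = v' j} := by omega
  have hU : Integrable (fun ω => ∏ i ∈ U, X i ω) P :=
    integrable_of_nonneg_of_le_one (Finset.measurable_prod U fun i _ => hXmeas i)
      (fun ω => prod_nonneg fun i _ => hX0 i ω) fun ω => prod_le_one (fun i _ => hX0 i ω)
      fun i _ => hX1 i ω
  calc ∫ ω, (∏ j, X (v j) ω) * ∏ j, X (v' j) ω ∂P ≤ ∫ ω, ∏ i ∈ U, X i ω ∂P :=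
        integral_mono_of_nonneg (ae_of_all _ fun ω => mul_nonneg
          (prod_nonneg fun j _ => hX0 _ ω) (prod_nonneg fun j _ => hX0 _ ω)) hU
          (ae_of_all _ fun ω => prod_mul_prod_le_prod_image_union (hX0 · ω) (hX1 · ω)
            (injective_of_comp_eq he hv) (injective_of_comp_eq he hv'))
    _ ≤ J ^ #U := hmom U
    _ = ∏ j, if v j = v' j then J else J ^ 2 := by
        rw [prod_ite, prod_const, prod_const, ← pow_mul, ← pow_add, hexp, mul_comm]

end Moments

theorem prod_blockWeight_mul_integral_le {Ω : Type*} [MeasurableSpace Ω] {P : Measure Ω}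
    [IsFiniteMeasure P] {K t m : ℕ} {J : ℝ} {X : Fin t → Ω → ℝ} (hXmeas : ∀ i, Measurable (X i))
    (hX0 : ∀ i ω, 0 ≤ X i ω) (hX1 : ∀ i ω, X i ω ≤ 1)
    (hmom : ∀ I : Finset (Fin t), ∫ ω, ∏ i ∈ I, X i ω ∂P ≤ J ^ #I) (v v' : Fin K → Fin t) :
    (∏ j : Fin K, blockWeight m j (v j) * blockWeight m j (v' j))
        * ∫ ω, (∏ j, X (v j) ω) * ∏ j, X (v' j) ω ∂P
      ≤ ∏ j : Fin K, blockWeight m j (v j) * blockWeight m j (v' j)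
          * (if v j = v' j then J else J ^ 2) := by
  rw [prod_mul_distrib (g := fun j => if v j = v' j then J else J ^ 2)]
  by_cases hzero : ∏ j : Fin K, blockWeight m j (v j) * blockWeight m j (v' j) = 0
  · rw [hzero, zero_mul, zero_mul]
  have hblock (j : Fin K) : blockWeight m j (v j) ≠ 0 ∧ blockWeight m j (v' j) ≠ 0 :=
    mul_ne_zero_iff.mp (prod_ne_zero_iff.mp hzero j (mem_univ j))
  refine mul_le_mul_of_nonneg_left ?_
    (prod_nonneg fun j _ => mul_nonneg (blockWeight_nonneg _) (blockWeight_nonneg _))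
  exact integral_prod_mul_prod_le_prod_ite hXmeas hX0 hX1 hmom (f := fun a : Fin t => (a : ℕ) / m)
    Fin.val_injective (fun j => div_eq_of_blockWeight_ne_zero (hblock j).1)
    fun j => div_eq_of_blockWeight_ne_zero (hblock j).2

theorem ProbabilityTheory.IndepFun.integral_comp_eq_sum {Ω S E : Type*} [MeasurableSpace Ω]
    {P : Measure Ω} [Fintype S] [MeasurableSpace S] [MeasurableSingletonClass S]
    [MeasurableSpace E] {Z : Ω → S} {W : Ω → E} (hind : IndepFun Z W P) (hZ : Measurable Z)
    (hW : Measurable W) {F : S → E → ℝ} (hF : ∀ s, Measurable (F s))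
    (hFint : ∀ s, Integrable (fun ω => F s (W ω)) P) :
    ∫ ω, F (Z ω) (W ω) ∂P = ∑ s, P.real (Z ⁻¹' {s}) * ∫ ω, F s (W ω) ∂P := by
  have hsplit ω : F (Z ω) (W ω) = ∑ s, (Z ⁻¹' {s}).indicator 1 ω * F s (W ω) := by
    rw [sum_eq_single (Z ω) (fun s _ hs => by simp [Set.indicator, Ne.symm hs]) (by simp)]
    simp
  have hterm s : ∫ ω, (Z ⁻¹' {s}).indicator 1 ω * F s (W ω) ∂P
      = P.real (Z ⁻¹' {s}) * ∫ ω, F s (W ω) ∂P := by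
    have hφ : Measurable (({s} : Set S).indicator (1 : S → ℝ)) :=
      measurable_const.indicator (measurableSet_singleton s)
    rw [← integral_indicator_one (hZ (measurableSet_singleton s))]
    exact (hind.comp hφ (hF s)).integral_mul_eq_mul_integral (hφ.comp hZ).aestronglyMeasurable
      ((hF s).comp hW).aestronglyMeasurable
  have hint s : Integrable (fun ω => (Z ⁻¹' {s}).indicator 1 ω * F s (W ω)) P :=
    ((hFint s).indicator (hZ (measurableSet_singleton s))).congr
      (ae_of_all _ fun ω => by by_cases h : ω ∈ Z ⁻¹' {s} <;> simp [h])
  simp_rw [hsplit]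
  rw [integral_finsetSum _ fun s _ => hint s]
  exact sum_congr rfl fun s _ => hterm s

lemma toReal_prod_ite_block {K t m : ℕ} (htm : K * m = t) (hK : 0 < K) (v : Fin K → Fin t) :
    (∏ j : Fin K, if (j : ℕ) * m ≤ (v j : ℕ) ∧ (v j : ℕ) < ((j : ℕ) + 1) * m
        then ((K : ENNReal) / (t : ENNReal)) else 0).toReal
      = ∏ j : Fin K, blockWeight m j (v j) := by
  have hweight : (m : ℝ)⁻¹ = K / t := by
    rw [← htm, Nat.cast_mul]
    field_simp
  rw [ENNReal.toReal_prod]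
  refine prod_congr rfl fun j _ => ?_
  unfold blockWeight
  split_ifs <;> simp [hweight]

theorem stmt10_general {Ω : Type*} [MeasurableSpace Ω] (P : Measure Ω) [IsProbabilityMeasure P]
    (t K : ℕ) (ht : 0 < t) (hK : 0 < K) (hKt : K ∣ t) (J : ℝ) (hJ0 : 0 < J)
    (X : Fin t → Ω → ℝ) (hXmeas : ∀ i, Measurable (X i))
    (hX01 : ∀ i ω, X i ω = 0 ∨ X i ω = 1)
    (hmom : ∀ I : Finset (Fin t), ∫ ω, ∏ i ∈ I, X i ω ∂P ≤ J ^ I.card)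
    (T T' : Fin K → Ω → Fin t)
    (hTmeas : ∀ j, Measurable (T j)) (hT'meas : ∀ j, Measurable (T' j))
    (hTTdist : ∀ v v' : Fin K → Fin t,
      P {ω | (∀ j, T j ω = v j) ∧ (∀ j, T' j ω = v' j)}
        = (∏ j : Fin K,
            (if (j : ℕ) * (t / K) ≤ (v j : ℕ) ∧ (v j : ℕ) < ((j : ℕ) + 1) * (t / K)
              then ((K : ENNReal) / (t : ENNReal)) else 0))
          * (∏ j : Fin K,
            (if (j : ℕ) * (t / K) ≤ (v' j : ℕ) ∧ (v' j : ℕ) < ((j : ℕ) + 1) * (t / K)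
              then ((K : ENNReal) / (t : ENNReal)) else 0)))
    (hindep : IndepFun (fun ω => (fun j => T j ω, fun j => T' j ω))
      (fun ω => fun i => X i ω) P) :
    ∫ ω, (∏ j : Fin K, X (T j ω) ω) * (∏ j : Fin K, X (T' j ω) ω) ∂P
      ≤ J ^ (2 * K) * (1 + (K : ℝ) * (1 - J) / (J * (t : ℝ))) ^ K := by
  classical
  set m := t / K
  have htm : K * m = t := Nat.mul_div_cancel' hKt
  have hm : 0 < m := Nat.div_pos (Nat.le_of_dvd ht hKt) hK
  have hX0 i ω : 0 ≤ X i ω := by rcases hX01 i ω with h | h <;> simp [h]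
  have hX1 i ω : X i ω ≤ 1 := by rcases hX01 i ω with h | h <;> simp [h]
  have hlaw v v' : P.real {ω | (fun j => T j ω, fun j => T' j ω) = (v, v')}
      = ∏ j : Fin K, blockWeight m j (v j) * blockWeight m j (v' j) := by
    simp only [Prod.mk.injEq, funext_iff, measureReal_def, hTTdist, ENNReal.toReal_mul,
      toReal_prod_ite_block htm hK, prod_mul_distrib]
  calc ∫ ω, (∏ j : Fin K, X (T j ω) ω) * (∏ j : Fin K, X (T' j ω) ω) ∂P
      = ∑ v, ∑ v', P.real {ω | (fun j => T j ω, fun j => T' j ω) = (v, v')}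
          * ∫ ω, (∏ j, X (v j) ω) * ∏ j, X (v' j) ω ∂P := by
        rw [← Fintype.sum_prod_type']
        exact hindep.integral_comp_eq_sum (F := fun p x => (∏ j, x (p.1 j)) * ∏ j, x (p.2 j))
          (by fun_prop) (by fun_prop) (fun _ => by fun_prop)
          fun p => integrable_prod_mul_prod hXmeas hX0 hX1 p.1 p.2
    _ ≤ ∑ v : Fin K → Fin t, ∑ v' : Fin K → Fin t, ∏ j : Fin K, blockWeight m j (v j)
          * blockWeight m j (v' j) * (if v j = v' j then J else J ^ 2) := by
        gcongr with v _ v' _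
        rw [hlaw]
        exact prod_blockWeight_mul_integral_le hXmeas hX0 hX1 hmom v v'
    _ = ∏ j : Fin K, ∑ a : Fin t, ∑ b : Fin t, blockWeight m j a * blockWeight m j b
          * (if a = b then J else J ^ 2) := by
        simp only [Fintype.prod_sum]
    _ = ∏ _j : Fin K, (J ^ 2 + (J - J ^ 2) / m) := prod_congr rfl fun j _ =>
        sum_sum_blockWeight_mul_ite hm (htm ▸ Nat.mul_le_mul_right m j.isLt) J
    _ = J ^ (2 * K) * (1 + (K : ℝ) * (1 - J) / (J * (t : ℝ))) ^ K := by
        rw [prod_const, card_univ, Fintype.card_fin, pow_mul, ← mul_pow, ← htm, Nat.cast_mul]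
        congr 1
        field_simp

/-- **Second-moment bound for two LSH rows.** Let `K ∣ t`, let `X_0,…,X_{t−1}` be
`{0,1}`-valued random variables with `E[∏_{j∈I} X_j] ≤ J^{|I|}` for every `I ⊆ [t]`
(`0 < J ≤ 1`), and let `T, T'` be two random rows (each `T_j` uniform on the block
`{j(t/K),…,(j+1)(t/K)−1}`, all `2K` coordinates mutually independent — expressed by the
product formula for the joint law), independent of `(X_0,…,X_{t−1})`. With
`Y = ∏_j X_{T_j}` and `Y' = ∏_j X_{T'_j}`,
`E[Y·Y'] ≤ J^{2K} (1 + K(1−J)/(Jt))^K`. -/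
theorem stmt10 {Ω : Type*} [MeasurableSpace Ω] (P : Measure Ω) [IsProbabilityMeasure P]
    (t K : ℕ) (ht : 0 < t) (hK : 0 < K) (hKt : K ∣ t) (J : ℝ) (hJ0 : 0 < J) (hJ1 : J ≤ 1)
    (X : Fin t → Ω → ℝ) (hXmeas : ∀ i, Measurable (X i))
    (hX01 : ∀ i ω, X i ω = 0 ∨ X i ω = 1)
    (hmom : ∀ I : Finset (Fin t), ∫ ω, ∏ i ∈ I, X i ω ∂P ≤ J ^ I.card)
    (T T' : Fin K → Ω → Fin t)
    (hTmeas : ∀ j, Measurable (T j)) (hT'meas : ∀ j, Measurable (T' j))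
    (hTTdist : ∀ v v' : Fin K → Fin t,
      P {ω | (∀ j, T j ω = v j) ∧ (∀ j, T' j ω = v' j)}
        = (∏ j : Fin K,
            (if (j : ℕ) * (t / K) ≤ (v j : ℕ) ∧ (v j : ℕ) < ((j : ℕ) + 1) * (t / K)
              then ((K : ENNReal) / (t : ENNReal)) else 0))
          * (∏ j : Fin K,
            (if (j : ℕ) * (t / K) ≤ (v' j : ℕ) ∧ (v' j : ℕ) < ((j : ℕ) + 1) * (t / K)
              then ((K : ENNReal) / (t : ENNReal)) else 0)))
    (hindep : IndepFun (fun ω => (fun j => T j ω, fun j => T' j ω))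
      (fun ω => fun i => X i ω) P) :
    ∫ ω, (∏ j : Fin K, X (T j ω) ω) * (∏ j : Fin K, X (T' j ω) ω) ∂P
      ≤ J ^ (2 * K) * (1 + (K : ℝ) * (1 - J) / (J * (t : ℝ))) ^ K :=
  stmt10_general P t K ht hK hKt J hJ0 X hXmeas hX01 hmom T T' hTmeas hT'meas hTTdist hindep
end

section
/- Let t be a positive integer, J a real with 0 < J ≤ 1, and X_0,…,X_{t−1} be {0,1}-valued random variables such that E[∏_{i ∈ I} X_i] ≤ J^{|I|} for every subset I ⊆ {0,…,t−1}. Then for every δ > 0, P( X_0 + ⋯ + X_{t−1} ≥ tJ(1+δ) ) ≤ ( e^{δ} / (1+δ)^{1+δ} )^{tJ}. (Chernoff upper tail from product-moment bounds, the Schmidt–Siegel–Srinivasan argument used to prove the sketch concentration.) -/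
open MeasureTheory Finset

/-- **Chernoff upper tail from product-moment bounds** (the Schmidt–Siegel–Srinivasan
argument used to prove the sketch concentration). Let `X_0,…,X_{t−1}` be `{0,1}`-valued
random variables (no independence assumed) with `E[∏_{i∈I} X_i] ≤ J^{|I|}` for every
`I ⊆ [t]`, where `0 < J ≤ 1`. Then for every `δ > 0`,
`P(∑ X_i ≥ tJ(1+δ)) ≤ (e^δ/(1+δ)^{1+δ})^{tJ}`. -/
theorem stmt13 {Ω : Type*} [MeasurableSpace Ω] (P : Measure Ω) [IsProbabilityMeasure P]
    (t : ℕ) (ht : 0 < t) (J : ℝ) (hJ0 : 0 < J) (hJ1 : J ≤ 1)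
    (X : Fin t → Ω → ℝ) (hXmeas : ∀ i, Measurable (X i))
    (hX01 : ∀ i ω, X i ω = 0 ∨ X i ω = 1)
    (hmom : ∀ I : Finset (Fin t), ∫ ω, ∏ i ∈ I, X i ω ∂P ≤ J ^ I.card)
    (δ : ℝ) (hδ : 0 < δ) :
    P {ω | (t : ℝ) * J * (1 + δ) ≤ ∑ i : Fin t, X i ω}
      ≤ ENNReal.ofReal ((Real.exp δ / (1 + δ) ^ (1 + δ)) ^ ((t : ℝ) * J)) := by
  classical
  have hδ1 : (0:ℝ) < 1 + δ := by linarith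
  have hX0 : ∀ i ω, 0 ≤ X i ω := fun i ω => by rcases hX01 i ω with h | h <;> simp [h]
  have hX1 : ∀ i ω, X i ω ≤ 1 := fun i ω => by rcases hX01 i ω with h | h <;> simp [h]
  set f : Ω → ℝ := fun ω => ∏ i : Fin t, (1 + δ * X i ω) with hf
  have hfmeas : Measurable f :=
    Finset.measurable_prod _ fun i _ => measurable_const.add (measurable_const.mul (hXmeas i))
  have hf_one_le : ∀ ω, 1 ≤ f ω := by
    intro ω
    simp only [hf]
    have h : ∏ _i : Fin t, (1:ℝ) ≤ ∏ i : Fin t, (1 + δ * X i ω) :=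
      Finset.prod_le_prod (fun i _ => zero_le_one)
        (fun i _ => by have := mul_nonneg hδ.le (hX0 i ω); linarith)
    simpa using h
  have hf_nonneg : ∀ ω, 0 ≤ f ω := fun ω => le_trans zero_le_one (hf_one_le ω)
  have hf_bdd : ∀ ω, f ω ≤ (1 + δ) ^ t := fun ω => by
    calc f ω ≤ ∏ _i : Fin t, (1 + δ) :=
          Finset.prod_le_prod (fun i _ => by nlinarith [hX0 i ω, hδ.le])
            (fun i _ => by nlinarith [hX1 i ω, hδ.le])
      _ = (1 + δ) ^ t := by simp
  have hf_int : Integrable f P := by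
    refine (integrable_const ((1 + δ) ^ t)).mono' hfmeas.aestronglyMeasurable ?_
    filter_upwards with ω
    rw [Real.norm_of_nonneg (hf_nonneg ω)]; exact hf_bdd ω
  -- product of {0,1} variables bounds
  have hprod01 : ∀ (I : Finset (Fin t)) ω, (0:ℝ) ≤ ∏ i ∈ I, X i ω ∧ ∏ i ∈ I, X i ω ≤ 1 :=
    fun I ω => ⟨Finset.prod_nonneg fun i _ => hX0 i ω,
      Finset.prod_le_one (fun i _ => hX0 i ω) (fun i _ => hX1 i ω)⟩
  have hint_term : ∀ I : Finset (Fin t), Integrable (fun ω => ∏ i ∈ I, X i ω) P := by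
    intro I
    refine (integrable_const (1:ℝ)).mono'
      ((Finset.measurable_prod _ fun i _ => hXmeas i).aestronglyMeasurable) ?_
    filter_upwards with ω
    rw [Real.norm_of_nonneg (hprod01 I ω).1]; exact (hprod01 I ω).2
  -- rewrite f as sum over subsets
  have hrw : ∀ ω, f ω = ∑ I ∈ (univ : Finset (Fin t)).powerset,
      δ ^ I.card * ∏ i ∈ I, X i ω := by
    intro ω
    have : f ω = ∏ i : Fin t, (δ * X i ω + 1) := by
      simp only [hf]; exact Finset.prod_congr rfl fun i _ => add_comm _ _
    rw [this, Finset.prod_add]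
    refine Finset.sum_congr rfl fun I _ => ?_
    rw [Finset.prod_mul_distrib, Finset.prod_const]
    simp [mul_comm]
  -- integral bound
  have hint : ∫ ω, f ω ∂P ≤ Real.exp ((t : ℝ) * J * δ) := by
    have h1 : ∫ ω, f ω ∂P ≤ ∑ I ∈ (univ : Finset (Fin t)).powerset, (δ * J) ^ I.card := by
      rw [show (fun ω => f ω) = fun ω => ∑ I ∈ (univ : Finset (Fin t)).powerset,
          δ ^ I.card * ∏ i ∈ I, X i ω from funext hrw]
      rw [integral_finset_sum _ fun I _ => (hint_term I).const_mul _]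
      refine Finset.sum_le_sum fun I _ => ?_
      rw [integral_const_mul, mul_pow]
      exact mul_le_mul_of_nonneg_left (hmom I) (pow_nonneg hδ.le _)
    have h2 : ∑ I ∈ (univ : Finset (Fin t)).powerset, (δ * J) ^ I.card = (δ * J + 1) ^ t := by
      have h := Finset.prod_add (fun _ : Fin t => δ * J) (fun _ => (1:ℝ)) univ
      simp only [one_pow, mul_one, Finset.prod_const, Finset.card_univ,
        Fintype.card_fin] at h
      exact h.symm
    have h3 : (δ * J + 1) ^ t ≤ Real.exp ((t : ℝ) * J * δ) := by
      have hle : δ * J + 1 ≤ Real.exp (δ * J) := Real.add_one_le_exp _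
      calc (δ * J + 1) ^ t ≤ Real.exp (δ * J) ^ t :=
            pow_le_pow_left₀ (by positivity) hle t
        _ = Real.exp ((t : ℝ) * (δ * J)) := by rw [← Real.exp_nat_mul]
        _ = Real.exp ((t : ℝ) * J * δ) := by ring_nf
    linarith [h1, h2 ▸ h1, h3]
  -- pointwise : f ω = (1+δ) ^ (S ω)
  have hfeq : ∀ ω, f ω = (1 + δ) ^ (∑ i : Fin t, X i ω) := by
    intro ω
    have hfac : ∀ i : Fin t, 1 + δ * X i ω = Real.exp (Real.log (1 + δ) * X i ω) := by
      intro i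
      rcases hX01 i ω with h | h
      · simp [h]
      · simp [h, Real.exp_log hδ1]
    calc f ω = ∏ i : Fin t, Real.exp (Real.log (1 + δ) * X i ω) :=
          Finset.prod_congr rfl fun i _ => hfac i
      _ = Real.exp (∑ i : Fin t, Real.log (1 + δ) * X i ω) := (Real.exp_sum _ _).symm
      _ = Real.exp (Real.log (1 + δ) * ∑ i : Fin t, X i ω) := by rw [← Finset.mul_sum]
      _ = (1 + δ) ^ (∑ i : Fin t, X i ω) := (Real.rpow_def_of_pos hδ1 _).symm
  set ε : ℝ := (1 + δ) ^ ((t : ℝ) * J * (1 + δ)) with hε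
  have hε_pos : 0 < ε := Real.rpow_pos_of_pos hδ1 _
  -- event inclusion
  have hsub : {ω | (t : ℝ) * J * (1 + δ) ≤ ∑ i : Fin t, X i ω} ⊆ {ω | ε ≤ f ω} := by
    intro ω hω
    simp only [Set.mem_setOf_eq] at hω ⊢
    rw [hfeq ω, hε]
    exact Real.rpow_le_rpow_of_exponent_le (by linarith) hω
  have hmarkov := mul_meas_ge_le_integral_of_nonneg
    (ae_of_all P hf_nonneg) hf_int ε
  have hsubm : P {ω | (t : ℝ) * J * (1 + δ) ≤ ∑ i : Fin t, X i ω} ≤ P {ω | ε ≤ f ω} :=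
    measure_mono hsub
  have htoReal : (P {ω | (t : ℝ) * J * (1 + δ) ≤ ∑ i : Fin t, X i ω}).toReal
      ≤ Real.exp ((t : ℝ) * J * δ) / ε := by
    rw [le_div_iff₀ hε_pos]
    calc (P {ω | (t : ℝ) * J * (1 + δ) ≤ ∑ i : Fin t, X i ω}).toReal * ε
        ≤ (P {ω | ε ≤ f ω}).toReal * ε :=
          mul_le_mul_of_nonneg_right
            (ENNReal.toReal_mono (measure_ne_top P _) hsubm) hε_pos.le
      _ = ε * (P {ω | ε ≤ f ω}).toReal := mul_comm _ _
      _ ≤ ∫ ω, f ω ∂P := hmarkov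
      _ ≤ Real.exp ((t : ℝ) * J * δ) := hint
  -- algebra: exp(tJδ)/ε = (exp δ / (1+δ)^(1+δ))^(tJ)
  have halg : Real.exp ((t : ℝ) * J * δ) / ε
      = (Real.exp δ / (1 + δ) ^ (1 + δ)) ^ ((t : ℝ) * J) := by
    have e1 : (Real.exp δ) ^ ((t : ℝ) * J) = Real.exp (δ * ((t : ℝ) * J)) := by
      rw [Real.rpow_def_of_pos (Real.exp_pos δ), Real.log_exp]
    have e2 : ((1 + δ) ^ (1 + δ)) ^ ((t : ℝ) * J) = (1 + δ) ^ ((1 + δ) * ((t : ℝ) * J)) :=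
      (Real.rpow_mul hδ1.le _ _).symm
    rw [Real.div_rpow (Real.exp_pos δ).le (Real.rpow_nonneg hδ1.le _), e1, e2, hε,
      show δ * ((t : ℝ) * J) = (t : ℝ) * J * δ by ring,
      show (1 + δ) * ((t : ℝ) * J) = (t : ℝ) * J * (1 + δ) by ring]
  calc P {ω | (t : ℝ) * J * (1 + δ) ≤ ∑ i : Fin t, X i ω}
      = ENNReal.ofReal (P {ω | (t : ℝ) * J * (1 + δ) ≤ ∑ i : Fin t, X i ω}).toReal :=
        (ENNReal.ofReal_toReal (measure_ne_top P _)).symm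
    _ ≤ ENNReal.ofReal ((Real.exp δ / (1 + δ) ^ (1 + δ)) ^ ((t : ℝ) * J)) :=
        ENNReal.ofReal_le_ofReal (halg ▸ htoReal)
end

section
/- Let t be a positive integer, J a real with 0 < J ≤ 1, and X_0,…,X_{t−1} be {0,1}-valued random variables such that E[∏_{i ∈ I} (1 − X_i)] ≤ (1−J)^{|I|} for every subset I ⊆ {0,…,t−1}. Then for every δ with 0 < δ < 1, P( X_0 + ⋯ + X_{t−1} ≤ tJ(1−δ) ) ≤ ( e^{−δ} / (1−δ)^{1−δ} )^{tJ}. (Chernoff lower tail from complementary product-moment bounds.) -/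
open MeasureTheory

/-- **Chernoff lower tail from complementary product-moment bounds.** Let
`X_0,…,X_{t−1}` be `{0,1}`-valued random variables (no independence assumed) with
`E[∏_{i∈I} (1 − X_i)] ≤ (1−J)^{|I|}` for every `I ⊆ [t]`, where `0 < J ≤ 1`. Then for
every `0 < δ < 1`, `P(∑ X_i ≤ tJ(1−δ)) ≤ (e^{−δ}/(1−δ)^{1−δ})^{tJ}`. -/
theorem stmt14 {Ω : Type*} [MeasurableSpace Ω] (P : Measure Ω) [IsProbabilityMeasure P]
    (t : ℕ) (ht : 0 < t) (J : ℝ) (hJ0 : 0 < J) (hJ1 : J ≤ 1)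
    (X : Fin t → Ω → ℝ) (hXmeas : ∀ i, Measurable (X i))
    (hX01 : ∀ i ω, X i ω = 0 ∨ X i ω = 1)
    (hmom : ∀ I : Finset (Fin t), ∫ ω, ∏ i ∈ I, (1 - X i ω) ∂P ≤ (1 - J) ^ I.card)
    (δ : ℝ) (hδ : 0 < δ) (hδ1 : δ < 1) :
    P {ω | ∑ i : Fin t, X i ω ≤ (t : ℝ) * J * (1 - δ)}
      ≤ ENNReal.ofReal ((Real.exp (-δ) / (1 - δ) ^ (1 - δ)) ^ ((t : ℝ) * J)) := by
  have h1δ : (0:ℝ) < 1 - δ := by linarith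
  set r : ℝ := (t : ℝ) * J with hr
  set a : ℝ := (t : ℝ) * J * (1 - δ) with ha
  set g : Ω → ℝ := fun ω => ∏ i : Fin t, (1 - δ * X i ω) with hg
  -- factor bounds
  have hfac : ∀ i ω, 0 ≤ 1 - X i ω ∧ 1 - X i ω ≤ 1 := by
    intro i ω; rcases hX01 i ω with h | h <;> simp [h]
  have hprodI : ∀ (I : Finset (Fin t)) ω,
      0 ≤ ∏ i ∈ I, (1 - X i ω) ∧ ∏ i ∈ I, (1 - X i ω) ≤ 1 := by
    intro I ω
    constructor
    · exact Finset.prod_nonneg fun i _ => (hfac i ω).1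
    · exact Finset.prod_le_one (fun i _ => (hfac i ω).1) (fun i _ => (hfac i ω).2)
  have hintI : ∀ I : Finset (Fin t), Integrable (fun ω => ∏ i ∈ I, (1 - X i ω)) P := by
    intro I
    refine (integrable_const (1:ℝ)).mono' ?_ (Filter.Eventually.of_forall fun ω => ?_)
    · exact (Finset.measurable_prod I fun i _ => (measurable_const.sub (hXmeas i))).aestronglyMeasurable
    · rw [Real.norm_eq_abs, abs_of_nonneg (hprodI I ω).1]; exact (hprodI I ω).2
  -- g bounds
  have hgfac : ∀ i ω, 1 - δ ≤ 1 - δ * X i ω ∧ 1 - δ * X i ω ≤ 1 := by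
    intro i ω; rcases hX01 i ω with h | h <;> constructor <;> simp [h] <;> linarith
  have hgpos : ∀ ω, 0 ≤ g ω :=
    fun ω => Finset.prod_nonneg fun i _ => le_trans h1δ.le (hgfac i ω).1
  have hgle : ∀ ω, g ω ≤ 1 :=
    fun ω => Finset.prod_le_one (fun i _ => le_trans h1δ.le (hgfac i ω).1)
      (fun i _ => (hgfac i ω).2)
  have hgmeas : Measurable g :=
    Finset.measurable_prod Finset.univ fun i _ =>
      (measurable_const.sub (measurable_const.mul (hXmeas i)))
  have hgint : Integrable g P := by
    refine (integrable_const (1:ℝ)).mono' hgmeas.aestronglyMeasurable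
      (Filter.Eventually.of_forall fun ω => ?_)
    rw [Real.norm_eq_abs, abs_of_nonneg (hgpos ω)]; exact hgle ω
  -- g ω = (1-δ) ^ (∑ X i ω)
  have hgS : ∀ ω, g ω = (1 - δ) ^ (∑ i : Fin t, X i ω) := by
    intro ω
    have h1 : ∀ i : Fin t, (1 : ℝ) - δ * X i ω = (1 - δ) ^ (X i ω) := by
      intro i; rcases hX01 i ω with h | h <;> simp [h]
    calc g ω = ∏ i : Fin t, (1 - δ) ^ (X i ω) := Finset.prod_congr rfl fun i _ => h1 i
      _ = ∏ i : Fin t, Real.exp (Real.log (1 - δ) * X i ω) := by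
          refine Finset.prod_congr rfl fun i _ => ?_
          rw [Real.rpow_def_of_pos h1δ]
      _ = Real.exp (∑ i : Fin t, Real.log (1 - δ) * X i ω) := (Real.exp_sum _ _).symm
      _ = (1 - δ) ^ (∑ i : Fin t, X i ω) := by
          rw [← Finset.mul_sum, ← Real.rpow_def_of_pos h1δ]
  -- expansion of g
  have hexpand : ∀ ω, g ω = ∑ I ∈ (Finset.univ : Finset (Fin t)).powerset,
      (δ ^ I.card * (1 - δ) ^ (Finset.univ \ I).card) * ∏ i ∈ I, (1 - X i ω) := by
    intro ω
    have h1 : g ω = ∏ i : Fin t, (δ * (1 - X i ω) + (1 - δ)) :=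
      Finset.prod_congr rfl fun i _ => by ring
    rw [h1, Finset.prod_add]
    refine Finset.sum_congr rfl fun I _ => ?_
    rw [Finset.prod_mul_distrib, Finset.prod_const, Finset.prod_const]
    ring
  -- expectation bound
  have hEg : ∫ ω, g ω ∂P ≤ (1 - δ * J) ^ t := by
    have hint' : ∀ I ∈ (Finset.univ : Finset (Fin t)).powerset,
        Integrable (fun ω => (δ ^ I.card * (1 - δ) ^ (Finset.univ \ I).card)
          * ∏ i ∈ I, (1 - X i ω)) P :=
      fun I _ => (hintI I).const_mul _
    calc ∫ ω, g ω ∂P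
        = ∑ I ∈ (Finset.univ : Finset (Fin t)).powerset,
            ∫ ω, (δ ^ I.card * (1 - δ) ^ (Finset.univ \ I).card)
              * ∏ i ∈ I, (1 - X i ω) ∂P := by
          rw [← integral_finset_sum _ hint']
          exact integral_congr_ae (Filter.Eventually.of_forall fun ω => hexpand ω)
      _ ≤ ∑ I ∈ (Finset.univ : Finset (Fin t)).powerset,
            (δ ^ I.card * (1 - δ) ^ (Finset.univ \ I).card) * (1 - J) ^ I.card := by
          refine Finset.sum_le_sum fun I _ => ?_
          rw [integral_const_mul]
          refine mul_le_mul_of_nonneg_left (hmom I) ?_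
          positivity
      _ = (1 - δ * J) ^ t := by
          have h2 : (∏ _i : Fin t, ((δ * (1 - J)) + (1 - δ)))
              = ∑ I ∈ (Finset.univ : Finset (Fin t)).powerset,
              (δ ^ I.card * (1 - δ) ^ (Finset.univ \ I).card) * (1 - J) ^ I.card := by
            rw [Finset.prod_add]
            refine Finset.sum_congr rfl fun I _ => ?_
            rw [Finset.prod_const, Finset.prod_const, mul_pow]
            ring
          rw [← h2, Finset.prod_const, Finset.card_univ, Fintype.card_fin]
          ring_nf
  -- Markov
  set ε : ℝ := (1 - δ) ^ a with hε
  have hεpos : 0 < ε := Real.rpow_pos_of_pos h1δ a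
  have hsub : {ω | ∑ i : Fin t, X i ω ≤ a} ⊆ {ω | ε ≤ g ω} := by
    intro ω hω
    rw [Set.mem_setOf_eq, hgS ω]
    exact Real.rpow_le_rpow_of_exponent_ge h1δ (by linarith) hω
  have hmarkov := mul_meas_ge_le_integral_of_nonneg
    (Filter.Eventually.of_forall hgpos) hgint ε
  have hPfin : P {ω | ∑ i : Fin t, X i ω ≤ a} ≠ ⊤ := measure_ne_top P _
  have hPle : (P {ω | ∑ i : Fin t, X i ω ≤ a}).toReal ≤ ((1 - δ * J) ^ t) / ε := by
    rw [le_div_iff₀ hεpos]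
    calc (P {ω | ∑ i : Fin t, X i ω ≤ a}).toReal * ε
        = ε * (P {ω | ∑ i : Fin t, X i ω ≤ a}).toReal := mul_comm _ _
      _ ≤ ε * (P {ω | ε ≤ g ω}).toReal := by
          refine mul_le_mul_of_nonneg_left ?_ hεpos.le
          exact ENNReal.toReal_mono (measure_ne_top P _) (measure_mono hsub)
      _ ≤ ∫ ω, g ω ∂P := hmarkov
      _ ≤ (1 - δ * J) ^ t := hEg
  -- final real-number inequality
  have hfinal : ((1 - δ * J) ^ t) / ε ≤ (Real.exp (-δ) / (1 - δ) ^ (1 - δ)) ^ r := by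
    have hRHS : (Real.exp (-δ) / (1 - δ) ^ (1 - δ)) ^ r = Real.exp (-δ * r) / ε := by
      rw [Real.div_rpow (Real.exp_pos _).le (Real.rpow_nonneg h1δ.le _)]
      congr 1
      · rw [← Real.exp_mul]
      · rw [← Real.rpow_mul h1δ.le, hε]
        congr 1
        rw [ha, hr]; ring
    rw [hRHS, div_le_div_iff_of_pos_right hεpos]
    have hexp : Real.exp (-δ * r) = Real.exp (-(δ * J)) ^ t := by
      rw [← Real.rpow_natCast (Real.exp _) t, ← Real.exp_mul, hr]
      congr 1; ring
    rw [hexp]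
    refine pow_le_pow_left₀ (by nlinarith) ?_ t
    linarith [Real.add_one_le_exp (-(δ * J))]
  calc P {ω | ∑ i : Fin t, X i ω ≤ a}
      = ENNReal.ofReal (P {ω | ∑ i : Fin t, X i ω ≤ a}).toReal :=
        (ENNReal.ofReal_toReal hPfin).symm
    _ ≤ ENNReal.ofReal ((Real.exp (-δ) / (1 - δ) ^ (1 - δ)) ^ r) :=
        ENNReal.ofReal_le_ofReal (le_trans hPle hfinal)
end

section
/- Let t ≥ r be positive integers, let γ ∈ [0,1] and δ ∈ (0,1] be reals with r ≥ 8/δ³, and let X_0,…,X_{t−1} be independent random variables taking values in [0,1] with E[X_i] = p for every i, where p ≥ γ + δ. Then P( there exists i with r ≤ i ≤ t such that X_0 + X_1 + ⋯ + X_{i−1} ≤ i·γ + i^{2/3} ) ≤ e^{−δ² r / 2} / (1 − e^{−δ²/2}). Equivalently, the Separate algorithm (which returns false at the first index i ∈ {r,…,t} with ∑_{j<i} X_j ≤ i·γ + i^{2/3}, and true if no such i exists) returns true with probability at least 1 − e^{−δ² r / 2} / (1 − e^{−δ²/2}). -/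
/-!
For `i ≥ r ≥ 8/δ³` we have `i^{2/3} ≤ δi/2`, so failing at index `i` forces the first `i`
variables to sum to at most `i(p − δ/2)`. Hoeffding's inequality bounds this by
`e^{−2(δ/2)²i} = e^{−δ²i/2}`, and a union bound over `i ≥ r` leaves a geometric tail.
-/

open MeasureTheory ProbabilityTheory Finset Real

theorem measureReal_sum_le_card_mul_sub_le {ι Ω : Type*} [MeasurableSpace Ω] {μ : Measure Ω}
    [IsProbabilityMeasure μ] {X : ι → Ω → ℝ} (hindep : iIndepFun X μ)
    (hmeas : ∀ i, AEMeasurable (X i) μ) (hX : ∀ i, ∀ᵐ ω ∂μ, X i ω ∈ Set.Icc 0 1)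
    {p : ℝ} (hmean : ∀ i, μ[X i] = p) (s : Finset ι) {ε : ℝ} (hε : 0 ≤ ε) :
    μ.real {ω | ∑ i ∈ s, X i ω ≤ #s * (p - ε)} ≤ exp (-2 * ε ^ 2 * #s) := by
  have hsubG : ∀ i ∈ s,
      HasSubgaussianMGF (fun ω ↦ p - X i ω) ((‖(1 : ℝ) - 0‖₊ / 2) ^ 2) μ := by
    intro i _
    have h := (hasSubgaussianMGF_of_mem_Icc (hmeas i) (hX i)).neg
    rw [hmean i] at h
    exact h.congr (ae_of_all _ fun ω ↦ by simp)
  have hindep' : iIndepFun (fun i ω ↦ p - X i ω) μ :=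
    hindep.comp (fun _ x ↦ p - x) fun _ ↦ by fun_prop
  have hevent :
      {ω | ∑ i ∈ s, X i ω ≤ #s * (p - ε)} = {ω | #s * ε ≤ ∑ i ∈ s, (p - X i ω)} := by
    ext ω
    simp only [Set.mem_ofPred_eq, sum_sub_distrib, sum_const, nsmul_eq_mul]
    constructor <;> intro h <;> linarith
  rw [hevent]
  refine (HasSubgaussianMGF.measure_sum_ge_le_of_iIndepFun hindep' hsubG
    (by positivity)).trans_eq ?_
  rcases (#s).eq_zero_or_pos with hs | hs
  · simp [hs]
  · congr 1
    simp only [sum_const, nsmul_eq_mul, NNReal.coe_mul, NNReal.coe_natCast, NNReal.coe_pow,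
      NNReal.coe_div, coe_nnnorm, sub_zero, norm_one, NNReal.coe_ofNat]
    field_simp

theorem measure_prefix_sum_le_mul_sub_le {Ω : Type*} [MeasurableSpace Ω] {μ : Measure Ω}
    [IsProbabilityMeasure μ] {t : ℕ} {X : Fin t → Ω → ℝ} (hindep : iIndepFun X μ)
    (hmeas : ∀ j, Measurable (X j)) (hX : ∀ j ω, X j ω ∈ Set.Icc (0 : ℝ) 1)
    {p : ℝ} (hmean : ∀ j, μ[X j] = p) {i : ℕ} (hit : i ≤ t) {ε : ℝ} (hε : 0 ≤ ε) :
    μ {ω | (∑ j : Fin t, if (j : ℕ) < i then X j ω else 0) ≤ i * (p - ε)}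
      ≤ ENNReal.ofReal (exp (-2 * ε ^ 2 * i)) := by
  have hcard : #{j : Fin t | (j : ℕ) < i} = i := by
    rw [Fin.card_filter_val_lt, min_eq_right hit]
  have h := measureReal_sum_le_card_mul_sub_le hindep (fun j ↦ (hmeas j).aemeasurable)
    (fun j ↦ ae_of_all _ (hX j)) hmean {j : Fin t | (j : ℕ) < i} hε
  simp only [hcard, sum_filter] at h
  rw [← ofReal_measureReal]
  exact ENNReal.ofReal_le_ofReal h

theorem rpow_two_thirds_le_mul {c x : ℝ} (hc : 0 < c) (hx : 1 ≤ c ^ 3 * x) :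
    x ^ (2 / 3 : ℝ) ≤ c * x := by
  have hx0 : 0 < x := pos_of_mul_pos_right (one_pos.trans_le hx) (by positivity)
  have hcube : (x ^ (2 / 3 : ℝ)) ^ 3 = x ^ 2 := by
    rw [← rpow_natCast, ← rpow_mul hx0.le]; norm_num
  refine le_of_pow_le_pow_left₀ three_ne_zero (by positivity) ?_
  rw [hcube]
  nlinarith [sq_nonneg x]

theorem mul_add_rpow_two_thirds_le_mul_sub {γ δ p x : ℝ} (hδ : 0 < δ) (hp : γ + δ ≤ p)
    (hx : 8 / δ ^ 3 ≤ x) : x * γ + x ^ (2 / 3 : ℝ) ≤ x * (p - δ / 2) := by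
  have hx0 : 0 ≤ x := (by positivity : (0 : ℝ) ≤ 8 / δ ^ 3).trans hx
  have hcx : 1 ≤ (δ / 2) ^ 3 * x := by
    rw [div_le_iff₀ (by positivity)] at hx
    nlinarith
  nlinarith [rpow_two_thirds_le_mul (half_pos hδ) hcx]

theorem stmt15_general {Ω : Type*} [MeasurableSpace Ω] (P : Measure Ω) [IsProbabilityMeasure P]
    (t r : ℕ)
    (γ δ p : ℝ) (hδ0 : 0 < δ)
    (hrδ : (8 : ℝ) / δ ^ 3 ≤ (r : ℝ))
    (X : Fin t → Ω → ℝ) (hXmeas : ∀ i, Measurable (X i))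
    (hX01 : ∀ i ω, X i ω ∈ Set.Icc (0 : ℝ) 1)
    (hindep : iIndepFun (m := fun _ : Fin t => (inferInstance : MeasurableSpace ℝ)) X P)
    (hmean : ∀ i, ∫ ω, X i ω ∂P = p) (hp : γ + δ ≤ p) :
    P {ω | ∃ i : ℕ, r ≤ i ∧ i ≤ t ∧
        (∑ j : Fin t, if (j : ℕ) < i then X j ω else 0)
          ≤ (i : ℝ) * γ + (i : ℝ) ^ ((2 : ℝ) / 3)}
      ≤ ENNReal.ofReal
          (Real.exp (-(δ ^ 2) * (r : ℝ) / 2) / (1 - Real.exp (-(δ ^ 2) / 2))) := by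
  set x := exp (-(δ ^ 2) / 2) with hx
  set E : ℕ → Set Ω := fun i ↦ {ω | (∑ j : Fin t, if (j : ℕ) < i then X j ω else 0)
    ≤ (i : ℝ) * γ + (i : ℝ) ^ ((2 : ℝ) / 3)}
  have hE : ∀ i ∈ Icc r t, P (E i) ≤ ENNReal.ofReal (x ^ i) := by
    intro i hi
    rw [mem_Icc] at hi
    have hthreshold := mul_add_rpow_two_thirds_le_mul_sub hδ0 hp
      (hrδ.trans (Nat.cast_le.2 hi.1))
    have hexp : exp (-2 * (δ / 2) ^ 2 * i) = x ^ i := by rw [hx, ← exp_nat_mul]; ring_nf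
    calc P (E i) ≤ _ := measure_mono fun ω (hω : _ ≤ _) ↦ hω.trans hthreshold
      _ ≤ _ := measure_prefix_sum_le_mul_sub_le hindep hXmeas hX01 hmean hi.2 (half_pos hδ0).le
      _ = _ := by rw [hexp]
  calc _ ≤ P (⋃ i ∈ Icc r t, E i) :=
        measure_mono <| by
          rintro ω ⟨i, hri, hit, hi⟩
          exact Set.mem_biUnion (mem_Icc.2 ⟨hri, hit⟩) hi
    _ ≤ ∑ i ∈ Icc r t, ENNReal.ofReal (x ^ i) :=
        (measure_biUnion_finset_le _ _).trans (sum_le_sum hE)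
    _ = ENNReal.ofReal (∑ i ∈ Ico r (t + 1), x ^ i) :=
        (ENNReal.ofReal_sum_of_nonneg fun i _ ↦ by positivity).symm
    _ ≤ ENNReal.ofReal (x ^ r / (1 - x)) :=
        ENNReal.ofReal_le_ofReal
          (geom_sum_Ico_le_of_lt_one (exp_pos _).le (exp_lt_one_iff.2 (by nlinarith)))
    _ = _ := by rw [hx, ← exp_nat_mul]; ring_nf

/-- **Success probability of the Separate algorithm under high similarity.** Let
`t ≥ r ≥ 8/δ³` be positive integers, `γ ∈ [0,1]`, `δ ∈ (0,1]`, and let `X_0,…,X_{t−1}`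
be independent `[0,1]`-valued random variables with common mean `p ≥ γ + δ`. Then the
probability that some index `i` with `r ≤ i ≤ t` satisfies
`X_0 + ⋯ + X_{i−1} ≤ i·γ + i^{2/3}` (i.e. that `Separate` returns `false`) is at most
`e^{−δ²r/2}/(1 − e^{−δ²/2})`. -/
theorem stmt15 {Ω : Type*} [MeasurableSpace Ω] (P : Measure Ω) [IsProbabilityMeasure P]
    (t r : ℕ) (hr : 0 < r) (hrt : r ≤ t)
    (γ δ p : ℝ) (hγ0 : 0 ≤ γ) (hγ1 : γ ≤ 1) (hδ0 : 0 < δ) (hδ1 : δ ≤ 1)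
    (hrδ : (8 : ℝ) / δ ^ 3 ≤ (r : ℝ))
    (X : Fin t → Ω → ℝ) (hXmeas : ∀ i, Measurable (X i))
    (hX01 : ∀ i ω, X i ω ∈ Set.Icc (0 : ℝ) 1)
    (hindep : iIndepFun (m := fun _ : Fin t => (inferInstance : MeasurableSpace ℝ)) X P)
    (hmean : ∀ i, ∫ ω, X i ω ∂P = p) (hp : γ + δ ≤ p) :
    P {ω | ∃ i : ℕ, r ≤ i ∧ i ≤ t ∧
        (∑ j : Fin t, if (j : ℕ) < i then X j ω else 0)
          ≤ (i : ℝ) * γ + (i : ℝ) ^ ((2 : ℝ) / 3)}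
      ≤ ENNReal.ofReal
          (Real.exp (-(δ ^ 2) * (r : ℝ) / 2) / (1 - Real.exp (-(δ ^ 2) / 2))) :=
  stmt15_general P t r γ δ p hδ0 hrδ X hXmeas hX01 hindep hmean hp
end

section
/- Let t ≥ r be positive integers, let γ ∈ [0,1] and δ ∈ (0, γ] be reals, and let X_0,…,X_{t−1} be independent random variables taking values in [0,1] with E[X_i] = p for every i, where p ≤ γ − δ. Then P( for every i with r ≤ i ≤ t, X_0 + X_1 + ⋯ + X_{i−1} > i·γ + i^{2/3} ) ≤ e^{−2δ² t}. Equivalently, the Separate algorithm returns true with probability at most e^{−2δ² t}. -/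
open MeasureTheory ProbabilityTheory

/-!
The event forces `X_0 + ⋯ + X_{t−1} > tγ ≥ t(p + δ)` at the last index `i = t`, and by
Hoeffding's inequality a sum of `t` independent `[0,1]`-valued variables of mean `p` exceeds
`t(p + δ)` with probability at most `e^{−2δ²t}`.
-/

lemma measureReal_sum_ge_card_mul_add_le_of_mem_Icc {Ω ι : Type*} [MeasurableSpace Ω]
    {μ : Measure Ω} [IsProbabilityMeasure μ] [Fintype ι] {X : ι → Ω → ℝ}
    (h_indep : iIndepFun X μ) (hm : ∀ i, AEMeasurable (X i) μ)
    (hb : ∀ i, ∀ᵐ ω ∂μ, X i ω ∈ Set.Icc (0 : ℝ) 1) {p : ℝ} (hmean : ∀ i, μ[X i] = p)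
    {δ : ℝ} (hδ : 0 ≤ δ) :
    μ.real {ω | (Fintype.card ι : ℝ) * (p + δ) ≤ ∑ i, X i ω}
      ≤ Real.exp (-2 * δ ^ 2 * Fintype.card ι) := by
  set n : ℕ := Fintype.card ι
  have h_subG : ∀ i ∈ Finset.univ,
      HasSubgaussianMGF (fun ω ↦ X i ω - p) 4⁻¹ μ := fun i _ ↦ by
    convert hasSubgaussianMGF_of_mem_Icc (hm i) (hb i) using 2
    · rw [hmean i]
    · norm_num
  have h_indep' : iIndepFun (fun i ω ↦ X i ω - p) μ :=
    h_indep.comp (fun _ x ↦ x - p) fun _ ↦ measurable_id.sub_const p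
  have hoeffding := HasSubgaussianMGF.measure_sum_ge_le_of_iIndepFun h_indep' h_subG
    (mul_nonneg n.cast_nonneg hδ)
  have h_event : {ω | (n : ℝ) * (p + δ) ≤ ∑ i, X i ω}
      = {ω | (n : ℝ) * δ ≤ ∑ i, (X i ω - p)} := by
    ext ω
    simp only [Set.mem_ofPred_eq, Finset.sum_sub_distrib, Finset.sum_const, Finset.card_univ,
      nsmul_eq_mul]
    constructor <;> intro h <;> linarith
  rw [h_event]
  refine hoeffding.trans_eq (congrArg Real.exp ?_)
  push_cast [Finset.sum_const, Finset.card_univ, nsmul_eq_mul]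
  rcases eq_or_ne n 0 with hn | hn
  · simp [n, hn]
  · field_simp [n]
    ring

theorem stmt16_general {Ω : Type*} [MeasurableSpace Ω] (P : Measure Ω) [IsProbabilityMeasure P]
    (t r : ℕ) (hrt : r ≤ t)
    (γ δ p : ℝ) (hδ0 : 0 < δ)
    (X : Fin t → Ω → ℝ) (hXmeas : ∀ i, Measurable (X i))
    (hX01 : ∀ i ω, X i ω ∈ Set.Icc (0 : ℝ) 1)
    (hindep : iIndepFun (m := fun _ : Fin t => (inferInstance : MeasurableSpace ℝ)) X P)
    (hmean : ∀ i, ∫ ω, X i ω ∂P = p) (hp : p ≤ γ - δ) :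
    P {ω | ∀ i : ℕ, r ≤ i → i ≤ t →
        (i : ℝ) * γ + (i : ℝ) ^ ((2 : ℝ) / 3)
          < ∑ j : Fin t, if (j : ℕ) < i then X j ω else 0}
      ≤ ENNReal.ofReal (Real.exp (-2 * δ ^ 2 * (t : ℝ))) := by
  have h_hoeffding := measureReal_sum_ge_card_mul_add_le_of_mem_Icc hindep
    (fun i ↦ (hXmeas i).aemeasurable) (fun i ↦ ae_of_all _ (hX01 i)) hmean hδ0.le
  rw [Fintype.card_fin] at h_hoeffding
  calc _ ≤ P {ω | (t : ℝ) * (p + δ) ≤ ∑ i, X i ω} := measure_mono fun ω hω ↦ ?_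
    _ ≤ _ := by
      rw [← ofReal_measureReal]
      exact ENNReal.ofReal_le_ofReal h_hoeffding
  have h_last := hω t hrt le_rfl
  simp only [Fin.is_lt, if_true] at h_last
  have h_mean_le : (t : ℝ) * (p + δ) ≤ t * γ := by gcongr; linarith
  have h_rpow_nonneg : (0 : ℝ) ≤ (t : ℝ) ^ ((2 : ℝ) / 3) := by positivity
  show (t : ℝ) * (p + δ) ≤ ∑ i, X i ω
  linarith

/-- **Failure probability of the Separate algorithm under low similarity.** Let
`t ≥ r` be positive integers, `γ ∈ [0,1]`, `δ ∈ (0, γ]`, and let `X_0,…,X_{t−1}` be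
independent `[0,1]`-valued random variables with common mean `p ≤ γ − δ`. Then the
probability that every index `i` with `r ≤ i ≤ t` satisfies
`X_0 + ⋯ + X_{i−1} > i·γ + i^{2/3}` (i.e. that `Separate` returns `true`) is at most
`e^{−2δ²t}`. -/
theorem stmt16 {Ω : Type*} [MeasurableSpace Ω] (P : Measure Ω) [IsProbabilityMeasure P]
    (t r : ℕ) (hr : 0 < r) (hrt : r ≤ t)
    (γ δ p : ℝ) (hγ0 : 0 ≤ γ) (hγ1 : γ ≤ 1) (hδ0 : 0 < δ) (hδγ : δ ≤ γ)
    (X : Fin t → Ω → ℝ) (hXmeas : ∀ i, Measurable (X i))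
    (hX01 : ∀ i ω, X i ω ∈ Set.Icc (0 : ℝ) 1)
    (hindep : iIndepFun (m := fun _ : Fin t => (inferInstance : MeasurableSpace ℝ)) X P)
    (hmean : ∀ i, ∫ ω, X i ω ∂P = p) (hp : p ≤ γ - δ) :
    P {ω | ∀ i : ℕ, r ≤ i → i ≤ t →
        (i : ℝ) * γ + (i : ℝ) ^ ((2 : ℝ) / 3)
          < ∑ j : Fin t, if (j : ℕ) < i then X j ω else 0}
      ≤ ENNReal.ofReal (Real.exp (-2 * δ ^ 2 * (t : ℝ))) :=
  stmt16_general P t r hrt γ δ p hδ0 X hXmeas hX01 hindep hmean hp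
end
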